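/- arXiv:math/0703404 — 8 statements merged into one kernel-verified Lean document; each statement's English description precedes it below -/
import Mathlib

section
/- For every polynomial p ∈ R the element φ(p) − 1 ⊗ p − Σ_{ℓ=1}^{n} e_ℓ ⊗ D_ℓ(p) lies in the image of I² ⊗ R in R ⊗_ℤ R, where I = (e_1, …, e_n) is the augmentation ideal of R; moreover the elements D_ℓ(p) are uniquely determined by this property (i.e., if q_1, …, q_n ∈ R satisfy φ(p) − 1 ⊗ p − Σ_ℓ e_ℓ ⊗ q_ℓ ∈ I² ⊗ R, then q_ℓ = D_ℓ(p) for all ℓ). -/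
open MvPolynomial Finset TensorProduct

noncomputable def ee (K : Type) [CommRing K] (n : ℕ) : ℕ → MvPolynomial (Fin n) K
  | 0 => 1
  | (m + 1) => if h : m + 1 ≤ n then MvPolynomial.X ⟨m, by omega⟩ else 0

noncomputable def DD (K : Type) [CommRing K] (n : ℕ) (i : Fin n) :
    MvPolynomial (Fin n) K →ₗ[K] MvPolynomial (Fin n) K :=
  ∑ j : Fin n, if i ≤ j then
    (LinearMap.mulLeft K (ee K n (j.val - i.val))).comp (MvPolynomial.pderiv j).toLinearMap
  else 0

/-- The coproduct `φ(e_k) = ∑_{i=0}^{k} e_i ⊗ e_{k-i}`. -/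
noncomputable def phi (n : ℕ) :
    MvPolynomial (Fin n) ℤ →ₐ[ℤ] (MvPolynomial (Fin n) ℤ ⊗[ℤ] MvPolynomial (Fin n) ℤ) :=
  MvPolynomial.aeval (fun j : Fin n =>
    ∑ i ∈ Finset.range (j.val + 2), (ee ℤ n i) ⊗ₜ[ℤ] (ee ℤ n (j.val + 1 - i)))

/-- The augmentation ideal `I = (e_1, …, e_n)`. -/
noncomputable def augI (n : ℕ) : Ideal (MvPolynomial (Fin n) ℤ) :=
  Ideal.span (Set.range (MvPolynomial.X : Fin n → MvPolynomial (Fin n) ℤ))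

/-- The image of `I² ⊗ R` in `R ⊗ R`. -/
noncomputable def I2T (n : ℕ) :
    Submodule ℤ (MvPolynomial (Fin n) ℤ ⊗[ℤ] MvPolynomial (Fin n) ℤ) :=
  LinearMap.range (TensorProduct.map
    (((augI n ^ 2 : Ideal (MvPolynomial (Fin n) ℤ)).restrictScalars ℤ).subtype)
    (LinearMap.id))

/-!
By right exactness of `- ⊗ R`, `I² ⊗ R` is the kernel of `π ⊗ id` for `π : R → R/I²`, so the
first claim says that `(π ⊗ id) ∘ φ` equals `p ↦ 1 ⊗ p + ∑ ε_ℓ ⊗ D_ℓ p`, where `ε_ℓ` is the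
class of `e_ℓ` in `R/I²`. Since the `D_ℓ` are derivations and `ε_ℓ ε_m = 0`, the latter is a ring
map as well, and the two agree on the generators because
`φ(e_k) = 1 ⊗ e_k + ∑_{1 ≤ ℓ ≤ k} e_ℓ ⊗ D_ℓ(e_k)`. For uniqueness, the coefficient of `e_ℓ`
vanishes on `I²`; applied to the first tensor factor it extracts `q_ℓ` from `∑ e_m ⊗ q_m`.
-/

section FirstOrder

variable {R A B ι : Type*} [CommSemiring R] [CommSemiring A] [CommSemiring B]
  [Algebra R A] [Algebra R B] [Fintype ι]

theorem one_tmul_add_sum_tmul_mul (ε : ι → A) (hε : ∀ i k, ε i * ε k = 0)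
    (D : ι → Derivation R B B) (a b : B) :
    (1 ⊗ₜ a + ∑ i, ε i ⊗ₜ D i a) * (1 ⊗ₜ b + ∑ i, ε i ⊗ₜ D i b) =
      (1 ⊗ₜ[R] (a * b) + ∑ i, ε i ⊗ₜ D i (a * b) : A ⊗[R] B) := by
  simp only [add_mul, mul_add, Finset.mul_sum, Finset.sum_mul, Algebra.TensorProduct.tmul_mul_tmul,
    one_mul, mul_one, hε, zero_tmul, Finset.sum_const_zero, add_zero, Derivation.leibniz,
    smul_eq_mul, tmul_add, Finset.sum_add_distrib, mul_comm (D _ a) b]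
  abel

noncomputable def firstOrderHom (ε : ι → A) (hε : ∀ i k, ε i * ε k = 0)
    (D : ι → Derivation R B B) : B →ₐ[R] A ⊗[R] B :=
  AlgHom.ofLinearMap
    (Algebra.TensorProduct.includeRight.toLinearMap +
      ∑ i, TensorProduct.mk R A B (ε i) ∘ₗ ↑(D i))
    (by simp [Algebra.TensorProduct.one_def])
    (fun a b => by simpa using (one_tmul_add_sum_tmul_mul ε hε D a b).symm)

theorem firstOrderHom_apply (ε : ι → A) (hε : ∀ i k, ε i * ε k = 0)
    (D : ι → Derivation R B B) (b : B) :
    firstOrderHom ε hε D b = 1 ⊗ₜ b + ∑ i, ε i ⊗ₜ D i b := by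
  simp [firstOrderHom]

end FirstOrder

theorem rTensor_eq_zero_of_mem_range_rTensor_subtype {S M P N : Type*} [CommSemiring S]
    [AddCommMonoid M] [AddCommMonoid P] [AddCommMonoid N] [Module S M] [Module S P] [Module S N]
    {J : Submodule S M} (f : M →ₗ[S] P) (hf : ∀ a ∈ J, f a = 0) {x : M ⊗[S] N}
    (hx : x ∈ LinearMap.range (LinearMap.rTensor N J.subtype)) : LinearMap.rTensor N f x = 0 := by
  obtain ⟨w, rfl⟩ := hx
  have hzero : f ∘ₗ J.subtype = 0 := LinearMap.ext fun a => hf a a.2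
  rw [← LinearMap.comp_apply, ← LinearMap.rTensor_comp, hzero, LinearMap.rTensor_zero,
    LinearMap.zero_apply]

theorem mem_range_rTensor_subtype_iff {S A B : Type*} [CommRing S] [CommRing A] [CommRing B]
    [Algebra S A] [Algebra S B] (I : Ideal A) (x : A ⊗[S] B) :
    x ∈ LinearMap.range (LinearMap.rTensor B (I.restrictScalars S).subtype) ↔
      Algebra.TensorProduct.map (Ideal.Quotient.mkₐ S I) (AlgHom.id S B) x = 0 := by
  have hker :=
    Algebra.TensorProduct.rTensor_ker (R := S) (C := B) _ (Ideal.Quotient.mkₐ_surjective S I)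
  rw [AlgHom.ker_coe (Ideal.Quotient.mkₐ S I), Ideal.Quotient.mkₐ_ker] at hker
  rw [← Ideal.map_includeLeft_eq, Submodule.restrictScalars_mem, ← hker]
  rfl

theorem coeff_single_eq_zero_of_mem_span_X_sq {σ K : Type*} [CommRing K] {a : MvPolynomial σ K}
    (ha : a ∈ Ideal.span (Set.range X) ^ 2) (i : σ) : coeff (Finsupp.single i 1) a = 0 := by
  have hcoeff : coeff (Finsupp.single i 1) a = constantCoeff (pderiv i a) := by
    simp [constantCoeff_eq, coeff_pderiv]
  have hX : Ideal.span (Set.range X) ≤ RingHom.ker (constantCoeff : MvPolynomial σ K →+* K) :=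
    Ideal.span_le.2 (by rintro _ ⟨j, rfl⟩; simp)
  rw [hcoeff]
  rw [pow_two] at ha
  refine Submodule.mul_induction_on ha (fun x hx y hy => ?_) (fun x y hx hy => ?_)
  · simp [Derivation.leibniz, RingHom.mem_ker.1 (hX hx), RingHom.mem_ker.1 (hX hy)]
  · rw [map_add, map_add, hx, hy, add_zero]

section DD

variable {K : Type} [CommRing K] {n : ℕ}

theorem DD_apply (i : Fin n) (p : MvPolynomial (Fin n) K) :
    DD K n i p = ∑ j : Fin n, if i ≤ j then ee K n (j - i) * pderiv j p else 0 := by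
  rw [DD, LinearMap.sum_apply]
  refine Finset.sum_congr rfl fun j _ => ?_
  split_ifs <;> rfl

theorem DD_leibniz (i : Fin n) (a b : MvPolynomial (Fin n) K) :
    DD K n i (a * b) = a • DD K n i b + b • DD K n i a := by
  simp only [DD_apply, Derivation.leibniz, smul_eq_mul, Finset.mul_sum, ← Finset.sum_add_distrib]
  refine Finset.sum_congr rfl fun j _ => ?_
  split_ifs <;> ring

noncomputable def derivationDD (i : Fin n) :
    Derivation K (MvPolynomial (Fin n) K) (MvPolynomial (Fin n) K) :=
  Derivation.mk' (DD K n i) (DD_leibniz i)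

theorem DD_X (i j : Fin n) : DD K n i (X j) = if i ≤ j then ee K n (j - i) else 0 := by
  classical
  simp only [DD_apply, pderiv_X, Pi.single_apply, mul_ite, mul_one, mul_zero, eq_comm (a := j)]
  rw [Finset.sum_eq_single j (by simp_all) (by simp)]
  simp

theorem ee_succ (i : Fin n) : ee K n (i + 1) = X i := dif_pos i.isLt

end DD

section Coproduct

variable {n : ℕ}

theorem phi_X (j : Fin n) :
    phi n (X j) = 1 ⊗ₜ[ℤ] X j + ∑ i : Fin n, X i ⊗ₜ[ℤ] DD ℤ n i (X j) := by
  have hsplit : phi n (X j) =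
      ∑ k ∈ Finset.range (j + 1), ee ℤ n (k + 1) ⊗ₜ[ℤ] ee ℤ n (j - k) + 1 ⊗ₜ[ℤ] X j := by
    rw [phi, aeval_X, Finset.sum_range_succ']
    congr 1
    · exact Finset.sum_congr rfl fun k _ => by rw [Nat.add_sub_add_right]
    · rw [Nat.sub_zero, ee_succ]; rfl
  have hrange : ∑ i : Fin n, X i ⊗ₜ[ℤ] DD ℤ n i (X j) =
      ∑ k ∈ Finset.range (j + 1), ee ℤ n (k + 1) ⊗ₜ[ℤ] ee ℤ n (j - k) := by
    simp only [DD_X, tmul_ite]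
    simp only [← ee_succ, Fin.le_def]
    rw [Fin.sum_univ_eq_sum_range
      (fun k => if k ≤ j then ee ℤ n (k + 1) ⊗ₜ[ℤ] ee ℤ n (j - k) else 0), ← Finset.sum_filter]
    refine Finset.sum_congr ?_ fun _ _ => rfl
    ext k
    simp only [Finset.mem_filter, Finset.mem_range]
    omega
  rw [hsplit, hrange, add_comm]

theorem mem_I2T_iff {x : MvPolynomial (Fin n) ℤ ⊗[ℤ] MvPolynomial (Fin n) ℤ} :
    x ∈ I2T n ↔
      Algebra.TensorProduct.map (Ideal.Quotient.mkₐ ℤ (augI n ^ 2)) (AlgHom.id ℤ _) x = 0 :=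
  mem_range_rTensor_subtype_iff _ x

theorem mk_X_mul_mk_X_eq_zero (i k : Fin n) :
    Ideal.Quotient.mk (augI n ^ 2) (X i) * Ideal.Quotient.mk (augI n ^ 2) (X k) = 0 := by
  rw [← map_mul, Ideal.Quotient.eq_zero_iff_mem, pow_two]
  exact Ideal.mul_mem_mul (Ideal.subset_span ⟨i, rfl⟩) (Ideal.subset_span ⟨k, rfl⟩)

theorem map_mk_comp_phi :
    (Algebra.TensorProduct.map (Ideal.Quotient.mkₐ ℤ (augI n ^ 2)) (AlgHom.id ℤ _)).comp
        (phi n) = firstOrderHom _ mk_X_mul_mk_X_eq_zero (derivationDD (K := ℤ)) := by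
  refine MvPolynomial.algHom_ext fun j => ?_
  simp [phi_X, firstOrderHom_apply, derivationDD]

theorem phi_sub_mem_I2T (p : MvPolynomial (Fin n) ℤ) :
    phi n p - 1 ⊗ₜ[ℤ] p - ∑ i : Fin n, X i ⊗ₜ[ℤ] DD ℤ n i p ∈ I2T n := by
  rw [mem_I2T_iff, map_sub, map_sub, ← AlgHom.comp_apply, map_mk_comp_phi, firstOrderHom_apply]
  simp [derivationDD]

theorem eq_zero_of_sum_X_tmul_mem_I2T {r : Fin n → MvPolynomial (Fin n) ℤ}
    (h : ∑ k : Fin n, X k ⊗ₜ[ℤ] r k ∈ I2T n) (i : Fin n) : r i = 0 := by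
  have hvanish := rTensor_eq_zero_of_mem_range_rTensor_subtype (lcoeff ℤ (Finsupp.single i 1))
    (fun a ha => coeff_single_eq_zero_of_mem_span_X_sq ha i) h
  simpa [coeff_X, Finsupp.single_left_inj] using congr(TensorProduct.lid ℤ _ $hvanish)

end Coproduct

theorem stmt1_general (n : ℕ) (p : MvPolynomial (Fin n) ℤ) :
    (phi n p - 1 ⊗ₜ[ℤ] p - ∑ i : Fin n, (MvPolynomial.X i) ⊗ₜ[ℤ] (DD ℤ n i p)) ∈ I2T n ∧
    ∀ q : Fin n → MvPolynomial (Fin n) ℤ,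
      (phi n p - 1 ⊗ₜ[ℤ] p - ∑ i : Fin n, (MvPolynomial.X i) ⊗ₜ[ℤ] (q i)) ∈ I2T n →
        ∀ i : Fin n, q i = DD ℤ n i p := by
  refine ⟨phi_sub_mem_I2T p, fun q hq i => ?_⟩
  have hdiff := (I2T n).sub_mem hq (phi_sub_mem_I2T p)
  simp only [sub_sub_sub_cancel_left, ← Finset.sum_sub_distrib, ← tmul_sub] at hdiff
  exact (sub_eq_zero.mp (eq_zero_of_sum_X_tmul_mem_I2T hdiff i)).symm

theorem stmt1 (n : ℕ) (hn : 1 ≤ n) (p : MvPolynomial (Fin n) ℤ) :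
    (phi n p - 1 ⊗ₜ[ℤ] p - ∑ i : Fin n, (MvPolynomial.X i) ⊗ₜ[ℤ] (DD ℤ n i p)) ∈ I2T n ∧
    ∀ q : Fin n → MvPolynomial (Fin n) ℤ,
      (phi n p - 1 ⊗ₜ[ℤ] p - ∑ i : Fin n, (MvPolynomial.X i) ⊗ₜ[ℤ] (q i)) ∈ I2T n →
        ∀ i : Fin n, q i = DD ℤ n i p :=
  stmt1_general n p
end

section
/- For all 1 ≤ k, ℓ ≤ n, the partial derivative ∂h_ℓ/∂e_k ∈ ℚ[e_1, …, e_n] has integer coefficients, i.e., it lies in the image of ℤ[e_1, …, e_n] in ℚ[e_1, …, e_n]. -/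
open MvPolynomial Finset

/-- Newton's recursion: `s_{ℓ} = (−1)^{ℓ−1} ℓ e_ℓ + ∑_{j=1}^{ℓ−1} (−1)^{j−1} e_j s_{ℓ−j}`. -/
noncomputable def ss (n : ℕ) : ℕ → MvPolynomial (Fin n) ℚ
  | 0 => 0
  | (ℓ + 1) =>
    ((-1 : ℚ) ^ ℓ * ((ℓ : ℚ) + 1)) • ee ℚ n (ℓ + 1) +
      ∑ j ∈ Finset.range ℓ, ((-1 : ℚ) ^ j) • (ee ℚ n (j + 1) * ss n (ℓ - j))
decreasing_by omega

/-- `h_ℓ = (−1)^{ℓ−1} s_ℓ / ℓ`, with `ℓ = i + 1`. -/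
noncomputable def hh (n : ℕ) (i : Fin n) : MvPolynomial (Fin n) ℚ :=
  ((-1 : ℚ) ^ (i : ℕ) / ((i : ℕ) + 1)) • ss n ((i : ℕ) + 1)

/-!
Put `a j = (-1)^j e_{j+1}` and `A(t) = ∑ a_j t^j`, so that `1 - t A(t) = ∑ e_j (-t)^j` and the
complete homogeneous polynomials `H_m` have generating function `1 / (1 - t A(t))`; their
recursion has integer coefficients. Newton's formula says `S = (t A)' + t A S` for
`S(t) = ∑ s_{m+1} t^m`, hence `s_{m+1} = ∑_i (i+1) a_i H_{m-i}`. Differentiating Newton's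
recursion with respect to `e_{k+1}` and using this identity gives
`∂s_ℓ/∂e_{k+1} = (-1)^k ℓ H_{ℓ-k-1}`, so the factor `ℓ` cancels in `h_ℓ = ± s_ℓ / ℓ` and
`∂h_{l+1}/∂e_{k+1} = (-1)^{l+k} H_{l-k}` has integer coefficients.
-/

namespace Newton

variable {R : Type*} [CommRing R] (a : ℕ → R)

/-- The coefficients of `1 / (1 - t ∑ a_j t^j)`. -/
noncomputable def completeSeq : ℕ → R
  | 0 => 1
  | m + 1 => ∑ j ∈ range (m + 1), a j * completeSeq (m - j)
decreasing_by omega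

/-- For `a j = (-1)^j e_{j+1}` this is Newton's recursion for the power sums. -/
noncomputable def powerSumSeq : ℕ → R
  | 0 => 0
  | m + 1 => ((m : R) + 1) * a m + ∑ j ∈ range m, a j * powerSumSeq (m - j)
decreasing_by omega

theorem completeSeq_zero : completeSeq a 0 = 1 := by rw [completeSeq]

theorem completeSeq_succ (m : ℕ) :
    completeSeq a (m + 1) = ∑ j ∈ range (m + 1), a j * completeSeq a (m - j) := by
  rw [completeSeq]

theorem powerSumSeq_zero : powerSumSeq a 0 = 0 := by rw [powerSumSeq]

theorem powerSumSeq_succ (m : ℕ) :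
    powerSumSeq a (m + 1) = ((m : R) + 1) * a m + ∑ j ∈ range m, a j * powerSumSeq a (m - j) := by
  rw [powerSumSeq]

theorem map_completeSeq {S : Type*} [CommRing S] (f : R →+* S) (m : ℕ) :
    f (completeSeq a m) = completeSeq (f ∘ a) m := by
  induction m using Nat.strong_induction_on with
  | _ m ih =>
  cases m with
  | zero => simp [completeSeq_zero]
  | succ m =>
    simp only [completeSeq_succ, map_sum, map_mul, Function.comp_apply]
    exact sum_congr rfl fun j hj => by rw [ih _ (by grind)]

theorem powerSumSeq_succ_eq_sum (m : ℕ) :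
    powerSumSeq a (m + 1) = ∑ i ∈ range (m + 1), ((i : R) + 1) * a i * completeSeq a (m - i) := by
  induction m using Nat.strong_induction_on with
  | _ m ih =>
  rw [powerSumSeq_succ, sum_range_succ, Nat.sub_self, completeSeq_zero, mul_one, add_comm]
  congr 1
  calc ∑ j ∈ range m, a j * powerSumSeq a (m - j)
      = ∑ j ∈ range m, ∑ i ∈ range (m - j),
          a j * (((i : R) + 1) * a i * completeSeq a (m - j - 1 - i)) := by
        refine sum_congr rfl fun j hj => ?_
        obtain ⟨r, hr⟩ : ∃ r, m - j = r + 1 := ⟨m - j - 1, by grind⟩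
        rw [hr, ih r (by grind), mul_sum, Nat.add_sub_cancel]
    _ = ∑ i ∈ range m, ∑ j ∈ range (m - i),
          a j * (((i : R) + 1) * a i * completeSeq a (m - j - 1 - i)) :=
        sum_comm' fun j i => by simp only [mem_range]; omega
    _ = ∑ i ∈ range m, ((i : R) + 1) * a i * completeSeq a (m - i) := by
        refine sum_congr rfl fun i hi => ?_
        obtain ⟨r, hr⟩ : ∃ r, m - i = r + 1 := ⟨m - i - 1, by grind⟩
        rw [hr, completeSeq_succ, mul_sum]
        refine sum_congr rfl fun j hj => ?_
        rw [show m - j - 1 - i = r - j by grind]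
        ring

theorem sum_sub_mul_completeSeq_add_powerSumSeq (N : R) (r : ℕ) :
    ∑ j ∈ range (r + 1), (N - j) * a j * completeSeq a (r - j) + powerSumSeq a (r + 1) =
      (N + 1) * completeSeq a (r + 1) := by
  rw [powerSumSeq_succ_eq_sum, completeSeq_succ, ← sum_add_distrib, mul_sum]
  exact sum_congr rfl fun j _ => by ring

theorem derivation_powerSumSeq {A : Type*} [CommRing A] [Algebra A R] (D : Derivation A R R)
    (k : ℕ) (c : R) (hD : ∀ j, D (a j) = if j = k then c else 0) (ℓ : ℕ) :
    D (powerSumSeq a ℓ) = if k < ℓ then (ℓ : R) * c * completeSeq a (ℓ - 1 - k) else 0 := by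
  induction ℓ using Nat.strong_induction_on with
  | _ ℓ ih =>
  cases ℓ with
  | zero => simp [powerSumSeq_zero]
  | succ m =>
    have hterm : ∀ j ∈ range m, D (a j * powerSumSeq a (m - j)) =
        (if j = k then c * powerSumSeq a (m - k) else 0) +
          if j < m - k then c * (((m : R) - j) * a j * completeSeq a (m - k - 1 - j)) else 0 := by
      intro j hj
      have hjm : j < m := mem_range.1 hj
      rw [D.leibniz, ih _ (by omega), hD, smul_eq_mul, smul_eq_mul, add_comm,
        show m - j - 1 - k = m - k - 1 - j by omega, Nat.cast_sub hjm.le]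
      congr 1
      · split_ifs with hjk
        · rw [hjk, mul_comm]
        · rw [mul_zero]
      · simp only [show k < m - j ↔ j < m - k by omega, mul_ite, mul_zero]
        split_ifs <;> ring
    have hfilter : (range m).filter (· < m - k) = range (m - k) := by
      ext; simp only [mem_filter, mem_range]; omega
    rw [powerSumSeq_succ, map_add, D.leibniz, D.map_add, D.map_natCast, D.map_one_eq_zero, map_sum,
      sum_congr rfl hterm, sum_add_distrib, sum_ite_eq', ← sum_filter, hfilter, ← mul_sum, hD]
    rcases lt_trichotomy k m with hk | rfl | hk
    · obtain ⟨r, rfl⟩ : ∃ r, m = k + 1 + r := ⟨m - k - 1, by omega⟩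
      rw [if_neg (by omega), if_pos (mem_range.2 hk), if_pos (by omega),
        show k + 1 + r + 1 - 1 - k = r + 1 by omega, show k + 1 + r - k = r + 1 by omega,
        Nat.add_sub_cancel]
      simp only [smul_zero, add_zero, zero_add]
      rw [← mul_add, add_comm, sum_sub_mul_completeSeq_add_powerSumSeq]
      push_cast
      ring
    · simp [completeSeq_zero]
    · rw [if_neg (by omega), if_neg (by rw [mem_range]; omega), if_neg (by omega),
        Nat.sub_eq_zero_of_le hk.le]
      simp

end Newton

open Newton

noncomputable def signedE (K : Type) [CommRing K] (n j : ℕ) : MvPolynomial (Fin n) K :=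
  (-1) ^ j * ee K n (j + 1)

theorem map_signedE (n : ℕ) :
    ⇑(MvPolynomial.map (Int.castRingHom ℚ)) ∘ signedE ℤ n = signedE ℚ n := by
  ext1 j
  simp only [Function.comp_apply, signedE, ee]
  split_ifs <;> simp

theorem pderiv_signedE (K : Type) [CommRing K] (n : ℕ) (k : Fin n) (j : ℕ) :
    pderiv k (signedE K n j) = if j = k then (-1) ^ (k : ℕ) else 0 := by
  have hpow : pderiv k ((-1 : MvPolynomial (Fin n) K) ^ j) = 0 := by
    rw [← map_one C, ← map_neg, ← map_pow, pderiv_C]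
  rw [signedE, Derivation.leibniz, hpow, smul_zero, add_zero, ee, smul_eq_mul]
  split_ifs with hjn hjk hjk
  · subst hjk
    rw [pderiv_X_self, mul_one]
  · rw [pderiv_X_of_ne (fun h => hjk (congrArg Fin.val h)), mul_zero]
  · exact absurd (hjk ▸ k.isLt) (by omega)
  · simp only [map_zero, mul_zero]

theorem ss_eq_powerSumSeq (n : ℕ) : ss n = powerSumSeq (signedE ℚ n) := by
  ext1 ℓ
  induction ℓ using Nat.strong_induction_on with
  | _ ℓ ih =>
  cases ℓ with
  | zero => rw [ss, powerSumSeq_zero]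
  | succ m =>
    rw [ss, powerSumSeq_succ]
    simp only [signedE, Algebra.smul_def, map_mul, map_pow, map_neg, map_one, map_add, map_natCast]
    congr 1
    · ring
    · refine sum_congr rfl fun j hj => ?_
      rw [ih _ (by grind)]
      ring

theorem pderiv_hh (n : ℕ) (k l : Fin n) :
    pderiv k (hh n l) =
      if (k : ℕ) ≤ l then (-1) ^ ((l : ℕ) + k) * completeSeq (signedE ℚ n) (l - k) else 0 := by
  have hss := derivation_powerSumSeq (signedE ℚ n) (pderiv k) k ((-1) ^ (k : ℕ))
    (pderiv_signedE ℚ n k) ((l : ℕ) + 1)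
  rw [← ss_eq_powerSumSeq, Nat.add_sub_cancel] at hss
  rw [hh, Derivation.map_smul, hss]
  split_ifs with hlt hle hle
  · have hl : ((l : ℕ) : ℚ) + 1 ≠ 0 := by positivity
    have hscalar : algebraMap ℚ (MvPolynomial (Fin n) ℚ) ((-1) ^ (l : ℕ) / ((l : ℕ) + 1)) *
        (((l : ℕ) + 1 : ℕ) : MvPolynomial (Fin n) ℚ) = (-1) ^ (l : ℕ) := by
      rw [← map_natCast (algebraMap ℚ (MvPolynomial (Fin n) ℚ)) ((l : ℕ) + 1), ← map_mul,
        Nat.cast_succ, div_mul_cancel₀ _ hl, map_pow, map_neg, map_one]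
    rw [Algebra.smul_def, ← mul_assoc, ← mul_assoc, hscalar, pow_add]
  · omega
  · omega
  · exact smul_zero _

theorem stmt3_general (n : ℕ) (k l : Fin n) :
    ∃ q : MvPolynomial (Fin n) ℤ,
      MvPolynomial.map (Int.castRingHom ℚ) q = MvPolynomial.pderiv k (hh n l) := by
  refine ⟨if (k : ℕ) ≤ l then (-1) ^ ((l : ℕ) + k) * completeSeq (signedE ℤ n) (l - k) else 0, ?_⟩
  rw [pderiv_hh]
  split_ifs
  · rw [map_mul, map_completeSeq, map_signedE, map_pow, map_neg, map_one]
  · exact map_zero _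

theorem stmt3 (n : ℕ) (hn : 1 ≤ n) (k l : Fin n) :
    ∃ q : MvPolynomial (Fin n) ℤ,
      MvPolynomial.map (Int.castRingHom ℚ) q = MvPolynomial.pderiv k (hh n l) :=
  stmt3_general n k l
end

section
/- The ℚ-algebra homomorphism ℚ[X_1, …, X_n] → ℚ[e_1, …, e_n] sending X_ℓ ↦ h_ℓ is an isomorphism (so h_1, …, h_n are algebraically independent generators of ℚ[e_1, …, e_n]), and under this isomorphism the derivation D_ℓ corresponds to the partial derivative ∂/∂X_ℓ for every 1 ≤ ℓ ≤ n; that is, D_ℓ is the partial derivative with respect to the coordinate h_ℓ. -/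
open MvPolynomial Finset

/-!
Put `h_m := (-1)^(m+1) s_m / m` for every `m`; these are the coefficients of `log E(t)`, where
`E(t) = ∑ e_k t^k`. In these coordinates Newton's identities read `m e_m = ∑_{i ≤ m} i h_i e_{m-i}`,
which is `E' = (log E)' E`. The derivation `D_ℓ` acts on generators by `D_ℓ e_k = e_{k-ℓ}`, and
applying it to this identity gives `D_ℓ h_m = δ_{ℓ m}` by induction on `m`; by the Leibniz rule
`D_ℓ` is then `∂/∂h_ℓ`. The same identity writes `e_m` as a polynomial in `h_1, …, h_m` and the
`e_k` with `k < m`, so `X ↦ h` is surjective, and a surjective endomorphism of a Noetherian ring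
is injective.
-/

theorem RingHom.injective_of_surjective_of_isNoetherianRing {R : Type*} [Ring R]
    [IsNoetherianRing R] (f : R →+* R) (hf : Function.Surjective f) : Function.Injective f := by
  have hmono : Monotone fun k => RingHom.ker (f ^ k) := by
    intro k m hkm x hx
    rw [RingHom.mem_ker] at hx ⊢
    rw [← Nat.sub_add_cancel hkm, pow_add, RingHom.mul_def, RingHom.comp_apply, hx, map_zero]
  obtain ⟨N, hN⟩ := monotone_stabilizes_iff_noetherian.mpr inferInstance ⟨_, hmono⟩
  rw [injective_iff_map_eq_zero]
  intro x hx
  obtain ⟨y, rfl⟩ : ∃ y, (f ^ N) y = x := by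
    rw [RingHom.coe_pow]
    exact hf.iterate N x
  have hy : y ∈ RingHom.ker (f ^ (N + 1)) := by
    rwa [RingHom.mem_ker, pow_succ', RingHom.mul_def, RingHom.comp_apply]
  exact RingHom.mem_ker.1 ((SetLike.ext_iff.1 (hN (N + 1) N.le_succ) y).2 hy)

namespace Newton

variable {n : ℕ}

lemma ee_zero : ee ℚ n 0 = 1 := rfl

lemma ee_succ (i : Fin n) : ee ℚ n (i + 1) = X i := by
  simp [ee, i.isLt]

noncomputable def logCoeff (n m : ℕ) : MvPolynomial (Fin n) ℚ :=
  ((-1 : ℚ) ^ (m + 1) / m) • ss n m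

lemma logCoeff_zero : logCoeff n 0 = 0 := by
  simp [logCoeff]

lemma hh_eq_logCoeff (i : Fin n) : hh n i = logCoeff n (i + 1) := by
  simp [hh, logCoeff, pow_succ]

lemma ss_eq_smul_logCoeff (m : ℕ) : ss n m = ((-1 : ℚ) ^ (m + 1) * m) • logCoeff n m := by
  rcases Nat.eq_zero_or_pos m with rfl | hm
  · simp [ss]
  · have hsq : ((-1 : ℚ) ^ (m + 1)) ^ 2 = 1 := by rw [← pow_mul, mul_comm, pow_mul]; simp
    have hm' : (m : ℚ) ≠ 0 := by positivity
    rw [logCoeff, smul_smul]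
    convert (one_smul ℚ (ss n m)).symm using 2
    field_simp
    exact hsq

theorem sum_range_smul_logCoeff_mul_ee (m : ℕ) :
    ∑ i ∈ range (m + 1), (i : ℚ) • (logCoeff n i * ee ℚ n (m - i)) = (m : ℚ) • ee ℚ n m := by
  rcases m with _ | t
  · simp
  have hrec := ss.eq_2 n t
  simp only [ss_eq_smul_logCoeff, Nat.succ_eq_add_one] at hrec
  set S := ∑ j ∈ range t, (((t - j : ℕ) : ℚ) • (logCoeff n (t - j) * ee ℚ n (j + 1)))
  have hsum : ∑ j ∈ range t, (-1 : ℚ) ^ j • (ee ℚ n (j + 1) *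
      (((-1 : ℚ) ^ (t - j + 1) * ((t - j : ℕ) : ℚ)) • logCoeff n (t - j))) =
      -((-1 : ℚ) ^ t • S) := by
    rw [smul_sum, ← sum_neg_distrib]
    refine sum_congr rfl fun j hj => ?_
    have hpow : (-1 : ℚ) ^ j * (-1) ^ (t - j + 1) = -(-1) ^ t := by
      rw [← pow_add, show j + (t - j + 1) = t + 1 by grind, pow_succ, mul_neg_one]
    rw [mul_smul_comm, mul_comm (ee ℚ n _)]
    linear_combination (norm := module)
      hpow • (((t - j : ℕ) : ℚ) • (logCoeff n (t - j) * ee ℚ n (j + 1)))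
  have hS : ∑ i ∈ range (t + 1), (i : ℚ) • (logCoeff n i * ee ℚ n (t + 1 - i)) = S := by
    rw [sum_range_succ', ← sum_range_reflect]
    simp only [Nat.cast_zero, zero_smul, add_zero]
    refine sum_congr rfl fun j hj => ?_
    rw [mem_range] at hj
    rw [show t - 1 - j + 1 = t - j by omega, show t + 1 - (t - j) = j + 1 by omega]
  rw [hsum] at hrec
  rw [sum_range_succ, hS, Nat.sub_self, ee_zero, mul_one]
  apply smul_right_injective _ (pow_ne_zero t (neg_ne_zero.2 (one_ne_zero (α := ℚ))))
  simp only
  linear_combination (norm := module) hrec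

noncomputable def derivationDD (n : ℕ) (l : Fin n) :
    Derivation ℚ (MvPolynomial (Fin n) ℚ) (MvPolynomial (Fin n) ℚ) :=
  ∑ j : Fin n, (if l ≤ j then ee ℚ n (j - l) else 0) • pderiv j

lemma derivationDD_apply (l : Fin n) (p : MvPolynomial (Fin n) ℚ) :
    derivationDD n l p = ∑ j : Fin n, (if l ≤ j then ee ℚ n (j - l) else 0) * pderiv j p := by
  rw [derivationDD, ← Derivation.coeFnAddMonoidHom_apply, map_sum, Finset.sum_apply]
  rfl

lemma DD_eq_derivationDD (l : Fin n) (p : MvPolynomial (Fin n) ℚ) :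
    DD ℚ n l p = derivationDD n l p := by
  rw [DD, derivationDD_apply, LinearMap.sum_apply]
  refine sum_congr rfl fun j _ => ?_
  split_ifs <;> simp

lemma derivationDD_X (l i : Fin n) :
    derivationDD n l (X i) = if l ≤ i then ee ℚ n (i - l) else 0 := by
  rw [derivationDD_apply, sum_eq_single i]
  · simp
  · intro j _ hj
    simp [pderiv_X_of_ne (Ne.symm hj)]
  · simp

lemma derivationDD_ee (l : Fin n) {k : ℕ} (hk : k ≤ n) :
    derivationDD n l (ee ℚ n k) = if (l : ℕ) + 1 ≤ k then ee ℚ n (k - (l + 1)) else 0 := by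
  rcases k with _ | k
  · simp [ee]
  · rw [show k = (⟨k, hk⟩ : Fin n) from rfl, ee_succ, derivationDD_X]
    simp [Fin.le_def]

lemma sum_range_smul_logCoeff_mul_derivationDD_ee (l : Fin n) {m : ℕ} (hm : m ≤ n) :
    ∑ i ∈ range (m + 1), (i : ℚ) • (logCoeff n i * derivationDD n l (ee ℚ n (m - i))) =
      if (l : ℕ) + 1 ≤ m then ((m - (l + 1) : ℕ) : ℚ) • ee ℚ n (m - (l + 1)) else 0 := by
  split_ifs with hl
  · rw [← sum_range_smul_logCoeff_mul_ee, show m + 1 = (m - (l + 1) + 1) + (l + 1) by omega,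
      sum_range_add, sum_eq_zero (s := range (l + 1)), add_zero]
    · refine sum_congr rfl fun i hi => ?_
      rw [derivationDD_ee l (by omega), if_pos (by grind), show m - i - (l + 1) = m - (l + 1) - i
        by omega]
    · intro i _
      rw [derivationDD_ee l (by omega), if_neg (by omega), mul_zero, smul_zero]
  · refine sum_eq_zero fun i _ => ?_
    rw [derivationDD_ee l (by omega), if_neg (by omega), mul_zero, smul_zero]

theorem derivationDD_logCoeff (l : Fin n) {m : ℕ} (hm : m ≤ n) :
    derivationDD n l (logCoeff n m) = if m = (l : ℕ) + 1 then 1 else 0 := by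
  induction m using Nat.strong_induction_on with
  | _ m ih =>
  rcases Nat.eq_zero_or_pos m with rfl | hpos
  · simp [logCoeff_zero]
  have key := congrArg (derivationDD n l) (sum_range_smul_logCoeff_mul_ee (n := n) m)
  simp only [map_sum, Derivation.map_smul, Derivation.leibniz, smul_add, sum_add_distrib,
    smul_eq_mul] at key
  rw [sum_range_smul_logCoeff_mul_derivationDD_ee l hm, derivationDD_ee l hm] at key
  set ℓ := (l : ℕ) + 1
  -- the terms `D_ℓ h_i` with `i < m` are known by induction: only `i = ℓ` survives
  have hlower : ∑ i ∈ range (m + 1), (i : ℚ) • (ee ℚ n (m - i) * derivationDD n l (logCoeff n i)) =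
      (m : ℚ) • derivationDD n l (logCoeff n m) +
        if ℓ < m then (ℓ : ℚ) • ee ℚ n (m - ℓ) else 0 := by
    rw [sum_range_succ, Nat.sub_self, ee_zero, one_mul, add_comm]
    congr 1
    rw [sum_congr rfl fun i hi => by rw [ih i (mem_range.1 hi) (by grind)]]
    simp [sum_ite_eq']
  rw [hlower] at key
  apply smul_right_injective _ (Nat.cast_ne_zero.2 hpos.ne' : (m : ℚ) ≠ 0)
  simp only
  rcases lt_trichotomy ℓ m with h | rfl | h
  · simp only [if_pos h, if_pos h.le, if_neg h.ne', Nat.cast_sub h.le] at key ⊢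
    linear_combination (norm := module) key
  · simp only [lt_irrefl, if_false, le_refl, if_true, Nat.sub_self, Nat.cast_zero, ee_zero]
      at key ⊢
    linear_combination (norm := module) key
  · simp only [if_neg (not_lt.2 h.le), if_neg (not_le.2 h), if_neg h.ne] at key ⊢
    linear_combination (norm := module) key

lemma derivationDD_hh (l i : Fin n) : derivationDD n l (hh n i) = if l = i then 1 else 0 := by
  rw [hh_eq_logCoeff, derivationDD_logCoeff l i.isLt]
  simp [Fin.val_inj, eq_comm]

theorem DD_aeval_hh (l : Fin n) (p : MvPolynomial (Fin n) ℚ) :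
    DD ℚ n l (aeval (hh n) p) = aeval (hh n) (pderiv l p) := by
  rw [DD_eq_derivationDD]
  induction p using MvPolynomial.induction_on with
  | C a => simp [← MvPolynomial.algebraMap_eq]
  | add p q hp hq => simp only [map_add, hp, hq]
  | mul_X p i hp =>
    simp only [map_mul, Derivation.leibniz, aeval_X, hp, derivationDD_hh, pderiv_X, smul_eq_mul,
      map_add]
    split_ifs <;> simp_all

lemma logCoeff_mem_range_aeval_hh {i : ℕ} (hi0 : 0 < i) (hin : i ≤ n) :
    logCoeff n i ∈ (aeval (R := ℚ) (hh n)).range := by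
  obtain ⟨j, rfl⟩ : ∃ j, i = j + 1 := ⟨i - 1, by omega⟩
  rw [← hh_eq_logCoeff ⟨j, hin⟩]
  exact ⟨X _, aeval_X _ _⟩

lemma ee_mem_range_aeval_hh {k : ℕ} (hk : k ≤ n) : ee ℚ n k ∈ (aeval (R := ℚ) (hh n)).range := by
  induction k using Nat.strong_induction_on with
  | _ k ih =>
  rcases Nat.eq_zero_or_pos k with rfl | hpos
  · exact one_mem _
  have hsum : (k : ℚ) • ee ℚ n k ∈ (aeval (R := ℚ) (hh n)).range := by
    rw [← sum_range_smul_logCoeff_mul_ee]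
    refine sum_mem fun i hi => ?_
    rcases Nat.eq_zero_or_pos i with rfl | hi0
    · simp
    · exact Subalgebra.smul_mem _ (mul_mem (logCoeff_mem_range_aeval_hh hi0 (by grind))
        (ih _ (by omega) (by omega))) _
  simpa [hpos.ne'] using Subalgebra.smul_mem _ hsum (k⁻¹ : ℚ)

theorem aeval_hh_surjective : Function.Surjective (aeval (R := ℚ) (hh n)) := by
  rw [← AlgHom.range_eq_top, eq_top_iff, ← adjoin_range_X, Algebra.adjoin_le_iff]
  rintro _ ⟨i, rfl⟩
  rw [← ee_succ]
  exact ee_mem_range_aeval_hh i.isLt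

end Newton

theorem stmt4_general (n : ℕ) :
    Function.Bijective
      (MvPolynomial.aeval (hh n) : MvPolynomial (Fin n) ℚ →ₐ[ℚ] MvPolynomial (Fin n) ℚ) ∧
    ∀ (l : Fin n) (p : MvPolynomial (Fin n) ℚ),
      DD ℚ n l (MvPolynomial.aeval (hh n) p) =
        MvPolynomial.aeval (hh n) (MvPolynomial.pderiv l p) :=
  ⟨⟨RingHom.injective_of_surjective_of_isNoetherianRing (aeval (hh n)).toRingHom
      Newton.aeval_hh_surjective, Newton.aeval_hh_surjective⟩, Newton.DD_aeval_hh⟩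

theorem stmt4 (n : ℕ) (hn : 1 ≤ n) :
    Function.Bijective
      (MvPolynomial.aeval (hh n) : MvPolynomial (Fin n) ℚ →ₐ[ℚ] MvPolynomial (Fin n) ℚ) ∧
    ∀ (l : Fin n) (p : MvPolynomial (Fin n) ℚ),
      DD ℚ n l (MvPolynomial.aeval (hh n) p) =
        MvPolynomial.aeval (hh n) (MvPolynomial.pderiv l p) :=
  stmt4_general n
end

section
/- For all subsets I, K ⊆ {1, …, n} and all monomials e^J, e^L of R, one has (−1)^{|I|} {α_I e^J, α_K e^L} = Δ(α_I e^L) · (α_K e^J) + (−1)^{|I|} (α_I e^L) · Δ(α_K e^J) in H; equivalently, Δ(α_I e^J · α_K e^L) = Δ(α_I e^J)·α_K e^L + (−1)^{|I|} α_I e^J·Δ(α_K e^L) + Δ(α_I e^L)·α_K e^J + (−1)^{|I|} α_I e^L·Δ(α_K e^J). -/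
open MvPolynomial Finset

/-- The model of `H = Λ_ℤ(α_1,…,α_n) ⊗ ℤ[e_1,…,e_n]`: a function `a : H' n` represents
`∑_I α_I · (a I)`. -/
abbrev H' (n : ℕ) := Finset (Fin n) → MvPolynomial (Fin n) ℤ

/-- `sgn I K` : the Koszul sign defined by `α_{I∪K} = sgn(I,K) α_I α_K` for disjoint `I, K`. -/
def sgn (n : ℕ) (I K : Finset (Fin n)) : ℤ :=
  (-1) ^ (((I ×ˢ K).filter (fun p => p.2 < p.1)).card)

/-- The basis element `α_I e^J` (more generally `α_I · p`). -/
noncomputable def bas {n : ℕ} (I : Finset (Fin n)) (p : MvPolynomial (Fin n) ℤ) : H' n :=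
  fun S => if S = I then p else 0

/-- The graded-commutative product on `H`. -/
noncomputable def wmul {n : ℕ} (a b : H' n) : H' n :=
  fun S => ∑ I ∈ S.powerset, sgn n I (S \ I) * a I * b (S \ I)

/-- The odd derivation `∂/∂α_ℓ` of `H` (ℤ-linear in `a`). -/
noncomputable def oda {n : ℕ} (l : Fin n) (a : H' n) : H' n :=
  fun S => if l ∈ S then 0
    else ((-1 : ℤ) ^ ((S.filter (fun i => i < l)).card)) • a (insert l S)

/-- The BV operator: `Δ(α_I e^J) = ∑_ℓ (∂α_I/∂α_ℓ) · D_ℓ(e^J)`, extended ℤ-linearly. -/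
noncomputable def Hdel {n : ℕ} (a : H' n) : H' n :=
  fun S => ∑ l : Fin n, if l ∈ S then 0
    else ((-1 : ℤ) ^ ((S.filter (fun i => i < l)).card)) • DD ℤ n l (a (insert l S))

/-- The BV bracket `{a,b} = (−1)^{|a|}(Δ(a·b) − Δ(a)·b) − a·Δ(b)`, defined on basis elements
and extended ℤ-bilinearly (via the canonical decomposition `a = ∑_I α_I (a I)`). -/
noncomputable def bk {n : ℕ} (a b : H' n) : H' n :=
  ∑ I : Finset (Fin n),
    (((-1 : ℤ) ^ I.card) • (Hdel (wmul (bas I (a I)) b) - wmul (Hdel (bas I (a I))) b)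
      - wmul (bas I (a I)) (Hdel b))

/-!
Write `Δ = ∑_ℓ D_ℓ ∘ ∂/∂α_ℓ`, where `∂/∂α_ℓ` is an odd derivation of the exterior algebra and `D_ℓ`,
acting on coefficients, is an even derivation. Expanding `Δ(α_I p · α_K q)` by both Leibniz rules
gives four terms: two of them are `Δ(α_I p)·α_K q` and `(-1)^|I| α_I p·Δ(α_K q)`, and in the two
cross terms `D_ℓ` hits the coefficient of the other factor, so, coefficients being commutative,
they are `Δ(α_I q)·α_K p` and `(-1)^|I| α_I q·Δ(α_K p)`. All Koszul signs reduce to counting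
elements below or above `ℓ`.
-/

section Signs

variable {n : ℕ}

def signBelow (A : Finset (Fin n)) (l : Fin n) : ℤ := (-1) ^ #(A.filter (· < l))

lemma signBelow_mul_self (A : Finset (Fin n)) (l : Fin n) :
    signBelow A l * signBelow A l = 1 := by
  rw [signBelow, ← mul_pow, neg_one_mul, neg_neg, one_pow]

lemma signBelow_union {I K : Finset (Fin n)} (h : Disjoint I K) (l : Fin n) :
    signBelow (I ∪ K) l = signBelow I l * signBelow K l := by
  rw [signBelow, filter_union, card_union_of_disjoint (disjoint_filter_filter h), pow_add]
  rfl

lemma signBelow_erase (A : Finset (Fin n)) (l : Fin n) :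
    signBelow (A.erase l) l = signBelow A l := by
  rw [signBelow, filter_erase, erase_eq_of_notMem (by simp)]
  rfl

lemma signBelow_mul_neg_one_pow_card_filter_gt {A : Finset (Fin n)} {l : Fin n} (hl : l ∉ A) :
    signBelow A l * (-1) ^ #(A.filter (l < ·)) = (-1) ^ #A := by
  rw [signBelow, ← pow_add, ← card_union_of_disjoint, ← filter_or,
    filter_true_of_mem fun x hx => lt_or_gt_of_ne (ne_of_mem_of_not_mem hx hl)]
  exact disjoint_filter.2 fun x _ h₁ h₂ => lt_asymm h₁ h₂

lemma sgn_eq_prod_signBelow (I K : Finset (Fin n)) : sgn n I K = ∏ i ∈ I, signBelow K i := by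
  simp only [sgn, signBelow, prod_pow_eq_pow_sum, card_filter, sum_product]

lemma sgn_eq_prod_card_filter_gt (I K : Finset (Fin n)) :
    sgn n I K = ∏ k ∈ K, (-1) ^ #(I.filter (k < ·)) := by
  rw [sgn, prod_pow_eq_pow_sum, card_filter, sum_product_right]
  simp only [card_filter]

lemma sgn_erase_left {I : Finset (Fin n)} {l : Fin n} (hl : l ∈ I) (K : Finset (Fin n)) :
    sgn n I K = signBelow K l * sgn n (I.erase l) K := by
  rw [sgn_eq_prod_signBelow, sgn_eq_prod_signBelow, mul_prod_erase _ _ hl]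

lemma sgn_erase_right (I : Finset (Fin n)) {K : Finset (Fin n)} {l : Fin n} (hl : l ∈ K) :
    sgn n I K = (-1) ^ #(I.filter (l < ·)) * sgn n I (K.erase l) := by
  rw [sgn_eq_prod_card_filter_gt, sgn_eq_prod_card_filter_gt]
  exact (mul_prod_erase K (fun k => (-1 : ℤ) ^ #(I.filter (k < ·))) hl).symm

variable {I K : Finset (Fin n)} {l : Fin n}

lemma sgn_mul_signBelow_union_of_mem_left (hd : Disjoint I K) (hl : l ∈ I) :
    sgn n I K * signBelow (I ∪ K) l = signBelow I l * sgn n (I.erase l) K := by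
  rw [sgn_erase_left hl, signBelow_union hd]
  linear_combination signBelow I l * sgn n (I.erase l) K * signBelow_mul_self K l

lemma sgn_mul_signBelow_union_of_mem_right (hd : Disjoint I K) (hl : l ∈ K) :
    sgn n I K * signBelow (I ∪ K) l = (-1) ^ #I * (signBelow K l * sgn n I (K.erase l)) := by
  rw [sgn_erase_right I hl, signBelow_union hd,
    ← signBelow_mul_neg_one_pow_card_filter_gt (disjoint_right.1 hd hl)]
  ring

lemma signBelow_mul_sgn_erase_add_eq_zero (hlI : l ∈ I) (hlK : l ∈ K) :
    signBelow I l * sgn n (I.erase l) K + (-1) ^ #I * (signBelow K l * sgn n I (K.erase l)) =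
      0 := by
  have hcard : (-1 : ℤ) ^ #I = -(signBelow I l * (-1) ^ #((I.erase l).filter (l < ·))) := by
    rw [← card_erase_add_one hlI, pow_succ, ← signBelow_erase I l,
      signBelow_mul_neg_one_pow_card_filter_gt (notMem_erase l I)]
    ring
  rw [sgn_erase_right _ hlK, sgn_erase_left hlI, signBelow_erase, hcard]
  linear_combination -(signBelow I l * (-1) ^ #((I.erase l).filter (l < ·)) *
    sgn n (I.erase l) (K.erase l)) * signBelow_mul_self K l

end Signs

section Product

variable {n : ℕ}

lemma bas_eq_smul (I : Finset (Fin n)) (p : MvPolynomial (Fin n) ℤ) : bas I p = p • bas I 1 := by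
  funext S
  by_cases h : S = I <;> simp [bas, h]

lemma wmul_smul_left (c : MvPolynomial (Fin n) ℤ) (a b : H' n) :
    wmul (c • a) b = c • wmul a b := by
  funext S
  simp only [wmul, Pi.smul_apply, smul_eq_mul, mul_sum]
  exact sum_congr rfl fun _ _ => by ring

lemma wmul_smul_right (c : MvPolynomial (Fin n) ℤ) (a b : H' n) :
    wmul a (c • b) = c • wmul a b := by
  funext S
  simp only [wmul, Pi.smul_apply, smul_eq_mul, mul_sum]
  exact sum_congr rfl fun _ _ => by ring

lemma wmul_zsmul_left (s : ℤ) (a b : H' n) : wmul (s • a) b = s • wmul a b := by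
  rw [← Int.cast_smul_eq_zsmul (MvPolynomial (Fin n) ℤ), wmul_smul_left, Int.cast_smul_eq_zsmul]

lemma wmul_zsmul_right (s : ℤ) (a b : H' n) : wmul a (s • b) = s • wmul a b := by
  rw [← Int.cast_smul_eq_zsmul (MvPolynomial (Fin n) ℤ), wmul_smul_right, Int.cast_smul_eq_zsmul]

lemma wmul_zero_right (a : H' n) : wmul a 0 = 0 := by
  simpa using wmul_smul_right 0 a 0

lemma wmul_zero_left (b : H' n) : wmul 0 b = 0 := by
  simpa using wmul_smul_left 0 0 b

lemma wmul_sum_left {ι : Type*} (s : Finset ι) (f : ι → H' n) (b : H' n) :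
    wmul (∑ i ∈ s, f i) b = ∑ i ∈ s, wmul (f i) b := by
  funext S
  simp only [wmul, Finset.sum_apply, mul_sum, sum_mul]
  rw [sum_comm]

lemma wmul_sum_right {ι : Type*} (s : Finset ι) (a : H' n) (f : ι → H' n) :
    wmul a (∑ i ∈ s, f i) = ∑ i ∈ s, wmul a (f i) := by
  funext S
  simp only [wmul, Finset.sum_apply, mul_sum]
  rw [sum_comm]

lemma wmul_bas_one_apply (I K S : Finset (Fin n)) :
    wmul (bas I 1) (bas K 1) S =
      if I ⊆ S ∧ S \ I = K then (sgn n I K : MvPolynomial (Fin n) ℤ) else 0 := by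
  simp only [wmul, bas, mul_ite, mul_one, mul_zero, ← ite_and, and_comm (a := S \ _ = K)]
  simp only [ite_and, sum_ite_eq', mem_powerset]
  split_ifs with _ hK
  · rw [hK]
  all_goals rfl

lemma wmul_bas_one (I K : Finset (Fin n)) :
    wmul (bas I 1) (bas K 1) = if Disjoint I K then sgn n I K • bas (I ∪ K) 1 else 0 := by
  funext S
  rw [wmul_bas_one_apply]
  by_cases h : I ⊆ S ∧ S \ I = K
  · obtain ⟨hIS, rfl⟩ := h
    simp [disjoint_sdiff, union_sdiff_of_subset hIS, bas, hIS]
  · split_ifs with hIK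
    · have hS : S ≠ I ∪ K := by
        rintro rfl
        exact h ⟨subset_union_left, union_sdiff_cancel_left hIK⟩
      simp [bas, hS]
    · rfl

lemma oda_smul (l : Fin n) (c : MvPolynomial (Fin n) ℤ) (a : H' n) :
    oda l (c • a) = c • oda l a := by
  funext S
  by_cases h : l ∈ S <;> simp [oda, h, mul_left_comm]

lemma oda_zsmul (l : Fin n) (s : ℤ) (a : H' n) : oda l (s • a) = s • oda l a := by
  rw [← Int.cast_smul_eq_zsmul (MvPolynomial (Fin n) ℤ), oda_smul, Int.cast_smul_eq_zsmul]

lemma oda_zero (l : Fin n) : oda l (0 : H' n) = 0 := by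
  simpa using oda_zsmul l 0 0

lemma oda_bas (l : Fin n) (M : Finset (Fin n)) (p : MvPolynomial (Fin n) ℤ) :
    oda l (bas M p) = if l ∈ M then signBelow M l • bas (M.erase l) p else 0 := by
  funext S
  split_ifs with hlM
  · by_cases hlS : l ∈ S
    · have hS : S ≠ M.erase l := fun h => notMem_erase l M (h ▸ hlS)
      simp [oda, bas, hlS, hS]
    · by_cases hins : insert l S = M
      · have hS : S = M.erase l := hins ▸ (erase_insert hlS).symm
        simp only [oda, bas, Pi.smul_apply, if_neg hlS, if_pos hins, if_pos hS]
        rw [hS, ← signBelow_erase M l, signBelow, zsmul_eq_mul]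
      · have hS : S ≠ M.erase l := fun h => hins (h ▸ insert_erase hlM)
        simp [oda, bas, hlS, hins, hS]
  · have hins : ∀ S : Finset (Fin n), insert l S ≠ M := fun S h => hlM (h ▸ mem_insert_self l S)
    simp [oda, bas, hins]

lemma oda_wmul_bas_one (l : Fin n) (I K : Finset (Fin n)) :
    oda l (wmul (bas I 1) (bas K 1)) =
      wmul (oda l (bas I 1)) (bas K 1) + (-1 : ℤ) ^ #I • wmul (bas I 1) (oda l (bas K 1)) := by
  by_cases hlI : l ∈ I <;> by_cases hlK : l ∈ K
  · have hIK : ¬ Disjoint I K := not_disjoint_iff.2 ⟨l, hlI, hlK⟩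
    rw [wmul_bas_one, if_neg hIK, oda_zero, oda_bas, oda_bas, if_pos hlI, if_pos hlK,
      wmul_zsmul_left, wmul_zsmul_right, wmul_bas_one, wmul_bas_one]
    -- If `I ∩ K = {l}`, the two terms on the right are nonzero and cancel.
    by_cases hd : Disjoint (I.erase l) K
    · rw [if_pos hd, if_pos (disjoint_erase_comm.1 hd), erase_union_of_mem hlK,
        union_erase_of_mem hlI, smul_smul, smul_smul, smul_smul, ← add_smul, mul_assoc,
        signBelow_mul_sgn_erase_add_eq_zero hlI hlK, zero_smul]
    · rw [if_neg hd, if_neg (mt disjoint_erase_comm.2 hd), smul_zero, smul_zero, smul_zero,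
        add_zero]
  · rw [oda_bas, oda_bas, if_pos hlI, if_neg hlK, wmul_zero_right, smul_zero, add_zero,
      wmul_zsmul_left, wmul_bas_one, wmul_bas_one]
    simp only [disjoint_erase_comm, erase_eq_of_notMem hlK]
    split_ifs with hd
    · rw [oda_zsmul, oda_bas, if_pos (mem_union_left K hlI), smul_smul,
        sgn_mul_signBelow_union_of_mem_left hd hlI, smul_smul, erase_union_distrib,
        erase_eq_of_notMem hlK]
    · rw [oda_zero, smul_zero]
  · rw [oda_bas, oda_bas, if_neg hlI, if_pos hlK, wmul_zero_left, zero_add, wmul_zsmul_right,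
      wmul_bas_one, wmul_bas_one]
    simp only [← disjoint_erase_comm, erase_eq_of_notMem hlI]
    split_ifs with hd
    · rw [oda_zsmul, oda_bas, if_pos (mem_union_right I hlK), smul_smul,
        sgn_mul_signBelow_union_of_mem_right hd hlK, erase_union_distrib, erase_eq_of_notMem hlI,
        smul_smul, smul_smul, mul_assoc]
    · rw [oda_zero, smul_zero, smul_zero]
  · rw [oda_bas, oda_bas, if_neg hlI, if_neg hlK, wmul_zero_left, wmul_zero_right, smul_zero,
      add_zero, wmul_bas_one]
    split_ifs
    · rw [oda_zsmul, oda_bas, if_neg (by simp [hlI, hlK]), smul_zero]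
    · rw [oda_zero]

end Product

section BV

variable {n : ℕ}

lemma DD_mul (l : Fin n) (p q : MvPolynomial (Fin n) ℤ) :
    DD ℤ n l (p * q) = DD ℤ n l p * q + p * DD ℤ n l q := by
  simp only [DD, LinearMap.sum_apply, sum_mul, mul_sum, ← sum_add_distrib]
  refine sum_congr rfl fun j _ => ?_
  split_ifs
  · simp only [LinearMap.comp_apply, LinearMap.mulLeft_apply, Derivation.coeFn_coe, pderiv_mul]
    ring
  · simp

lemma DD_one (l : Fin n) : DD ℤ n l 1 = 0 := by
  simp only [DD, LinearMap.sum_apply]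
  exact sum_eq_zero fun j _ => by split_ifs <;> simp

lemma Hdel_smul (c : MvPolynomial (Fin n) ℤ) (a : H' n) :
    Hdel (c • a) = c • Hdel a + ∑ l, DD ℤ n l c • oda l a := by
  funext S
  simp only [Hdel, oda, Pi.add_apply, Pi.smul_apply, Finset.sum_apply, smul_eq_mul, mul_sum,
    ← sum_add_distrib]
  refine sum_congr rfl fun l _ => ?_
  split_ifs
  · simp
  · rw [DD_mul]
    simp only [zsmul_eq_mul]
    ring

lemma Hdel_zsmul (s : ℤ) (a : H' n) : Hdel (s • a) = s • Hdel a := by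
  funext S
  simp only [Hdel, Pi.smul_apply, smul_sum, map_zsmul]
  refine sum_congr rfl fun l _ => ?_
  split_ifs
  · simp
  · rw [smul_comm]

lemma Hdel_zero : Hdel (0 : H' n) = 0 := by
  simpa using Hdel_zsmul 0 0

lemma Hdel_bas_one (M : Finset (Fin n)) : Hdel (bas M 1) = 0 := by
  funext S
  simp [Hdel, bas, apply_ite (DD ℤ n _), DD_one]

lemma Hdel_wmul_bas_one (I K : Finset (Fin n)) : Hdel (wmul (bas I 1) (bas K 1)) = 0 := by
  rw [wmul_bas_one]
  split_ifs
  · rw [Hdel_zsmul, Hdel_bas_one, smul_zero]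
  · exact Hdel_zero

lemma Hdel_wmul_bas (I K : Finset (Fin n)) (p q : MvPolynomial (Fin n) ℤ) :
    Hdel (wmul (bas I p) (bas K q)) =
      wmul (Hdel (bas I p)) (bas K q) + (-1 : ℤ) ^ #I • wmul (bas I p) (Hdel (bas K q))
        + wmul (Hdel (bas I q)) (bas K p) + (-1 : ℤ) ^ #I • wmul (bas I q) (Hdel (bas K p)) := by
  rw [bas_eq_smul I p, bas_eq_smul K q, bas_eq_smul I q, bas_eq_smul K p]
  simp only [Hdel_smul, Hdel_bas_one, Hdel_wmul_bas_one, smul_zero, zero_add, wmul_smul_left,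
    wmul_smul_right, wmul_sum_left, wmul_sum_right, smul_smul, oda_wmul_bas_one, smul_sum, DD_mul,
    ← sum_add_distrib]
  refine sum_congr rfl fun l _ => ?_
  module

end BV

lemma bk_bas {n : ℕ} (I : Finset (Fin n)) (p : MvPolynomial (Fin n) ℤ) (b : H' n) :
    bk (bas I p) b =
      (-1 : ℤ) ^ #I • (Hdel (wmul (bas I p) b) - wmul (Hdel (bas I p)) b)
        - wmul (bas I p) (Hdel b) := by
  rw [bk, sum_eq_single I]
  · simp [bas]
  · intro I' _ hne
    simp [bas, hne, bas_eq_smul I' 0, Hdel_zero, wmul_zero_left]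
  · simp

theorem stmt6_general (n : ℕ) (I K : Finset (Fin n)) (J L : Fin n →₀ ℕ) :
    ((-1 : ℤ) ^ I.card) •
        bk (bas I (MvPolynomial.monomial J 1)) (bas K (MvPolynomial.monomial L 1))
      = wmul (Hdel (bas I (MvPolynomial.monomial L 1))) (bas K (MvPolynomial.monomial J 1))
        + ((-1 : ℤ) ^ I.card) •
            wmul (bas I (MvPolynomial.monomial L 1))
              (Hdel (bas K (MvPolynomial.monomial J 1))) := by
  rw [bk_bas, smul_sub, smul_smul, ← pow_add, Even.neg_one_pow ⟨_, rfl⟩, one_smul, Hdel_wmul_bas]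
  abel

theorem stmt6 (n : ℕ) (hn : 1 ≤ n) (I K : Finset (Fin n)) (J L : Fin n →₀ ℕ) :
    ((-1 : ℤ) ^ I.card) •
        bk (bas I (MvPolynomial.monomial J 1)) (bas K (MvPolynomial.monomial L 1))
      = wmul (Hdel (bas I (MvPolynomial.monomial L 1))) (bas K (MvPolynomial.monomial J 1))
        + ((-1 : ℤ) ^ I.card) •
            wmul (bas I (MvPolynomial.monomial L 1))
              (Hdel (bas K (MvPolynomial.monomial J 1))) :=
  stmt6_general n I K J L
end

section
/- In the BV algebra A = Λ_ℤ(α) ⊗ ℤ[h] of the loop homology of an odd-dimensional sphere, the bracket satisfies: {α h^{a}, α h^{b}} = (a − b) α h^{a+b−1} for all integers a, b ≥ 0 (with the convention α h^{−1} = 0, so the right side when a + b = 0 is 0), {α h^{a}, h^{m}} = −m h^{a+m−1} for all a ≥ 0, m ≥ 0, and {h^{k}, h^{m}} = 0 for all k, m ≥ 0. In particular the elements L(k) := α h^{k+1} (k ≥ −1) satisfy the Witt relations {L(k), L(ℓ)} = (k − ℓ) L(k+ℓ). -/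
open Polynomial

/-- The model of `A = Λ_ℤ(α) ⊗ ℤ[h]`: `(p, q)` represents `p + α·q`. -/
abbrev A13 := Polynomial ℤ × Polynomial ℤ

/-- The graded-commutative product: `(p + αq)(p' + αq') = pp' + α(pq' + qp')`. -/
noncomputable def mul13 (a b : A13) : A13 :=
  (a.1 * b.1, a.1 * b.2 + a.2 * b.1)

/-- The BV operator: `Δ(h^ℓ) = 0`, `Δ(α h^ℓ) = ℓ h^{ℓ−1}`. -/
noncomputable def del13 (a : A13) : A13 :=
  (Polynomial.derivative a.2, 0)

/-- The bracket `{a,b} = (−1)^{|a|}(Δ(a·b) − Δ(a)·b) − a·Δ(b)` on basis elements,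
extended ℤ-bilinearly via the decomposition into even part `(a.1, 0)` and odd
part `(0, a.2)`. -/
noncomputable def bk13 (a b : A13) : A13 :=
  ((del13 (mul13 (a.1, 0) b) - mul13 (del13 (a.1, 0)) b) - mul13 (a.1, 0) (del13 b))
    + (-(del13 (mul13 (0, a.2) b) - mul13 (del13 (0, a.2)) b) - mul13 (0, a.2) (del13 b))

/-!
Since `α² = 0`, the bracket of two odd elements `αp`, `αq` is `α(p'q − pq')`, the bracket of `αp`
with an even `r` is `−pr'`, and two even elements bracket to zero. So on the odd part the bracket
is that of the vector fields `p ∂_h`, and on monomials `α h^{k+1}` this is the Witt algebra.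
-/

theorem bk13_odd_odd (p q : ℤ[X]) :
    bk13 (0, p) (0, q) = (0, derivative p * q - p * derivative q) := by
  simp [bk13, mul13, del13]

theorem bk13_odd_even (p r : ℤ[X]) :
    bk13 (0, p) (r, 0) = (-(p * derivative r), 0) := by
  simp [bk13, mul13, del13]

theorem bk13_even_even (p r : ℤ[X]) : bk13 (p, 0) (r, 0) = 0 := by
  simp [bk13, mul13, del13]

theorem derivative_X_pow_mul_X_pow {R : Type*} [CommSemiring R] (a b : ℕ) :
    derivative (X ^ a : R[X]) * X ^ b = (a : R[X]) * X ^ (a + b - 1) := by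
  rcases a with _ | a
  · simp
  · rw [derivative_X_pow, mul_assoc, ← pow_add]
    congr 2
    omega

theorem X_pow_mul_derivative_X_pow {R : Type*} [CommSemiring R] (a b : ℕ) :
    (X ^ a : R[X]) * derivative (X ^ b) = (b : R[X]) * X ^ (a + b - 1) := by
  rw [mul_comm, derivative_X_pow_mul_X_pow, add_comm]

theorem stmt13 :
    (∀ a b : ℕ, bk13 (0, Polynomial.X ^ a) (0, Polynomial.X ^ b)
        = ((a : ℤ) - (b : ℤ)) • ((0 : Polynomial ℤ), (Polynomial.X : Polynomial ℤ) ^ (a + b - 1)))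
    ∧ (∀ a m : ℕ, bk13 (0, Polynomial.X ^ a) (Polynomial.X ^ m, 0)
        = (-(m : ℤ)) • ((Polynomial.X : Polynomial ℤ) ^ (a + m - 1), (0 : Polynomial ℤ)))
    ∧ (∀ k m : ℕ, bk13 (Polynomial.X ^ k, 0) (Polynomial.X ^ m, 0) = 0)
    ∧ (∀ k l : ℤ, -1 ≤ k → -1 ≤ l →
        bk13 (0, Polynomial.X ^ (k + 1).toNat) (0, Polynomial.X ^ (l + 1).toNat)
          = (k - l) • ((0 : Polynomial ℤ), (Polynomial.X : Polynomial ℤ) ^ (k + l + 1).toNat)) := by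
  have odd_odd : ∀ a b : ℕ, bk13 (0, X ^ a) (0, X ^ b)
      = ((a : ℤ) - (b : ℤ)) • ((0 : ℤ[X]), (X : ℤ[X]) ^ (a + b - 1)) := by
    intro a b
    rw [bk13_odd_odd, derivative_X_pow_mul_X_pow, X_pow_mul_derivative_X_pow, ← sub_mul]
    simp [sub_smul, sub_mul]
  refine ⟨odd_odd, fun a m => ?_, fun k m => bk13_even_even _ _, fun k l hk hl => ?_⟩
  · rw [bk13_odd_even, X_pow_mul_derivative_X_pow]
    simp
  · have hsub : ((k + 1).toNat : ℤ) - ((l + 1).toNat : ℤ) = k - l := by omega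
    have hexp : (k + 1).toNat + (l + 1).toNat - 1 = (k + l + 1).toNat := by omega
    rw [odd_odd, hsub, hexp]
end

section
/- For every subset I ⊆ U, the element α_I := (−1)^{|I|(|I|−1)/2} sgn(I, I^c) x_{I^c} is the unique element α ∈ Λ satisfying ⟨y_J, α⟩ = ⟨y_J ∧ y_I, x_U⟩ for all subsets J ⊆ U. -/
open Finset

/-- The model of the exterior algebra `Λ_ℤ(x_1,…,x_n)`: a function `a : Lam n` represents
`∑_I (a I) x_I`. -/
abbrev Lam (n : ℕ) := Finset (Fin n) → ℤ

/-- The basis element `x_I`. -/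
def basL (n : ℕ) (I : Finset (Fin n)) : Lam n :=
  fun S => if S = I then 1 else 0

/-- The exterior (wedge, Pontrjagin) product on `Lam n`. -/
def wl {n : ℕ} (a b : Lam n) : Lam n :=
  fun S => ∑ I ∈ S.powerset, sgn n I (S \ I) * a I * b (S \ I)

/-- The sign `(−1)^{|I|(|I|−1)/2} sgn(I, I^c)`. -/
def eps (n : ℕ) (I : Finset (Fin n)) : ℤ :=
  (-1) ^ (I.card * (I.card - 1) / 2) * sgn n I Iᶜ

/-- `α_I = (−1)^{|I|(|I|−1)/2} sgn(I, I^c) x_{I^c}`. -/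
def alphaL (n : ℕ) (I : Finset (Fin n)) : Lam n :=
  fun S => if S = Iᶜ then eps n I else 0

/-- The Kronecker pairing `⟨y_I, x_J⟩ = (−1)^{|I|(|I|−1)/2} δ_{I,J}`, extended ℤ-bilinearly. -/
def pairL (n : ℕ) (y x : Lam n) : ℤ :=
  ∑ I : Finset (Fin n), ((-1 : ℤ) ^ (I.card * (I.card - 1) / 2)) * y I * x I

lemma pair_bas_left (n : ℕ) (J : Finset (Fin n)) (a : Lam n) :
    pairL n (basL n J) a = (-1) ^ (J.card * (J.card - 1) / 2) * a J := by
  unfold pairL basL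
  rw [Finset.sum_eq_single J]
  · simp
  · intro b _ hb; simp [hb]
  · simp

lemma pair_bas_right (n : ℕ) (J : Finset (Fin n)) (y : Lam n) :
    pairL n y (basL n J) = (-1) ^ (J.card * (J.card - 1) / 2) * y J := by
  unfold pairL basL
  rw [Finset.sum_eq_single J]
  · simp [mul_comm]
  · intro b _ hb; simp [hb]
  · simp

lemma wl_bas (n : ℕ) (J I : Finset (Fin n)) :
    wl (basL n J) (basL n I) Finset.univ = if Jᶜ = I then sgn n J Jᶜ else 0 := by
  unfold wl basL
  rw [Finset.sum_eq_single J]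
  · simp [← Finset.compl_eq_univ_sdiff]
  · intro b _ hb; simp [hb]
  · simp

lemma tri_add (k m : ℕ) :
    (k + m) * ((k + m) - 1) / 2 = k * (k - 1) / 2 + m * (m - 1) / 2 + k * m := by
  rcases k with _ | a
  · simp
  rcases m with _ | b
  · simp
  obtain ⟨p, hp⟩ : Even ((a + 1) * a) := by
    simpa [mul_comm] using Nat.even_mul_succ_self a
  obtain ⟨q, hq⟩ : Even ((b + 1) * b) := by
    simpa [mul_comm] using Nat.even_mul_succ_self b
  have h1 : (a + 1) * a / 2 = p := by omega
  have h2 : (b + 1) * b / 2 = q := by omega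
  have key : (a + 1 + (b + 1)) * (a + b + 1)
      = 2 * (p + q + (a + 1) * (b + 1)) := by nlinarith [hp, hq]
  have hs : (a + 1 + (b + 1)) - 1 = a + b + 1 := by omega
  rw [hs]
  simp only [Nat.succ_sub_one]
  omega

lemma sgn_mul_sgn (n : ℕ) (I : Finset (Fin n)) :
    sgn n I Iᶜ * sgn n Iᶜ I = (-1) ^ (I.card * Iᶜ.card) := by
  unfold sgn
  rw [← pow_add]
  congr 1
  have hswap : ((Iᶜ ×ˢ I).filter (fun p => p.2 < p.1)).card
      = ((I ×ˢ Iᶜ).filter (fun p => p.1 < p.2)).card := by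
    apply Finset.card_bij' (fun p _ => Prod.swap p) (fun p _ => Prod.swap p)
    · intro p hp
      simp only [Finset.mem_filter, Finset.mem_product] at hp ⊢
      exact ⟨⟨hp.1.2, hp.1.1⟩, hp.2⟩
    · intro p hp
      simp only [Finset.mem_filter, Finset.mem_product] at hp ⊢
      exact ⟨⟨hp.1.2, hp.1.1⟩, hp.2⟩
    · intro p _; simp
    · intro p _; simp
  rw [hswap]
  have hne : ∀ p ∈ I ×ˢ Iᶜ, ¬ (p.2 < p.1) ↔ (p.1 < p.2) := by
    intro p hp
    simp only [Finset.mem_product, Finset.mem_compl] at hp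
    have : p.1 ≠ p.2 := fun h => hp.2 (h ▸ hp.1)
    constructor
    · intro h; exact lt_of_le_of_ne (not_lt.mp h) this
    · intro h h'; exact absurd (lt_trans h h') (lt_irrefl _)
  calc ((I ×ˢ Iᶜ).filter (fun p => p.2 < p.1)).card
        + ((I ×ˢ Iᶜ).filter (fun p => p.1 < p.2)).card
      = ((I ×ˢ Iᶜ).filter (fun p => p.2 < p.1)).card
        + ((I ×ˢ Iᶜ).filter (fun p => ¬ p.2 < p.1)).card := by
        rw [Finset.filter_congr hne]
    _ = (I ×ˢ Iᶜ).card := Finset.card_filter_add_card_filter_not _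
    _ = I.card * Iᶜ.card := Finset.card_product _ _

lemma key_sign (n : ℕ) (I : Finset (Fin n)) :
    (-1 : ℤ) ^ (Iᶜ.card * (Iᶜ.card - 1) / 2) * eps n I
      = (-1) ^ ((Finset.univ : Finset (Fin n)).card * ((Finset.univ : Finset (Fin n)).card - 1) / 2)
        * sgn n Iᶜ I := by
  have hcard : (Finset.univ : Finset (Fin n)).card = I.card + Iᶜ.card := by
    have h := Finset.card_add_card_compl I
    rw [Finset.card_univ]; omega
  rw [hcard, tri_add, eps]
  have h1 : sgn n I Iᶜ = (-1) ^ (I.card * Iᶜ.card) * sgn n Iᶜ I := by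
    have h2 : sgn n Iᶜ I * sgn n Iᶜ I = 1 := by
      unfold sgn; rw [← pow_add]; exact Even.neg_one_pow ⟨_, rfl⟩
    calc sgn n I Iᶜ = sgn n I Iᶜ * (sgn n Iᶜ I * sgn n Iᶜ I) := by rw [h2, mul_one]
      _ = (sgn n I Iᶜ * sgn n Iᶜ I) * sgn n Iᶜ I := by ring
      _ = (-1) ^ (I.card * Iᶜ.card) * sgn n Iᶜ I := by rw [sgn_mul_sgn]
  rw [h1, pow_add, pow_add]
  ring

theorem stmt14 (n : ℕ) (hn : 1 ≤ n) (I : Finset (Fin n)) :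
    (∀ J : Finset (Fin n),
      pairL n (basL n J) (alphaL n I)
        = pairL n (wl (basL n J) (basL n I)) (basL n Finset.univ))
    ∧ (∀ a : Lam n,
        (∀ J : Finset (Fin n),
          pairL n (basL n J) a
            = pairL n (wl (basL n J) (basL n I)) (basL n Finset.univ)) →
        a = alphaL n I) := by
  have main : ∀ J : Finset (Fin n),
      pairL n (basL n J) (alphaL n I)
        = pairL n (wl (basL n J) (basL n I)) (basL n Finset.univ) := by
    intro J
    rw [pair_bas_left, pair_bas_right, wl_bas]
    unfold alphaL
    by_cases h : J = Iᶜ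
    · subst h
      rw [if_pos rfl, if_pos (compl_compl I)]
      have := key_sign n I
      rw [compl_compl] at *
      linarith [key_sign n I]
    · rw [if_neg h, if_neg (fun hc => h (by rw [← hc, compl_compl]))]
      ring
  refine ⟨main, fun a ha => ?_⟩
  funext J
  have h1 := (ha J).trans (main J).symm
  rw [pair_bas_left, pair_bas_left] at h1
  have hu : (-1 : ℤ) ^ (J.card * (J.card - 1) / 2) ≠ 0 := by
    exact pow_ne_zero _ (by norm_num)
  exact mul_left_cancel₀ hu h1
end

section
/- For every subset I ⊆ U and every 1 ≤ i ≤ n: if i ∈ I and i is the r-th smallest element of I, then x_i ∧ α_I = (−1)^{r−1} α_{I∖{i}} in Λ; and if i ∉ I, then x_i ∧ α_I = 0. In other words, multiplication by x_i on the elements α_I acts as the odd partial derivative ∂/∂α_i. -/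
open Finset

/-- Auxiliary count `F A B = #{(a,b) ∈ A × B : b < a}`. -/
def Fc {n : ℕ} (A B : Finset (Fin n)) : ℕ :=
  ((A ×ˢ B).filter (fun p => p.2 < p.1)).card

lemma Fc_singleton_left {n : ℕ} (i : Fin n) (B : Finset (Fin n)) :
    Fc {i} B = (B.filter (fun k => k < i)).card := by
  rw [Fc, Finset.singleton_product, Finset.filter_map, Finset.card_map]
  rfl

lemma Fc_singleton_right {n : ℕ} (A : Finset (Fin n)) (i : Fin n) :
    Fc A {i} = (A.filter (fun k => i < k)).card := by
  rw [Fc, Finset.product_singleton, Finset.filter_map, Finset.card_map]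
  rfl

lemma Fc_insert_left {n : ℕ} (i : Fin n) (A B : Finset (Fin n)) (h : i ∉ A) :
    Fc (insert i A) B = (B.filter (fun k => k < i)).card + Fc A B := by
  have hu : (insert i A) ×ˢ B = ({i} ×ˢ B) ∪ (A ×ˢ B) := by
    ext ⟨x, y⟩
    simp only [Finset.mem_product, Finset.mem_insert, Finset.mem_union, Finset.mem_singleton,
      or_and_right]
  have hdisj : Disjoint (({i} ×ˢ B).filter (fun p => p.2 < p.1))
      ((A ×ˢ B).filter (fun p => p.2 < p.1)) := by
    simp only [Finset.disjoint_left, Finset.mem_filter, Finset.mem_product,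
      Finset.mem_singleton]
    rintro ⟨a, b⟩ ⟨⟨ha, _⟩, _⟩ ⟨⟨ha', _⟩, _⟩
    exact h (ha ▸ ha')
  rw [Fc, hu, Finset.filter_union, Finset.card_union_of_disjoint hdisj]
  rw [← Fc, ← Fc, Fc_singleton_left]

lemma Fc_insert_right {n : ℕ} (A : Finset (Fin n)) (i : Fin n) (B : Finset (Fin n)) (h : i ∉ B) :
    Fc A (insert i B) = (A.filter (fun k => i < k)).card + Fc A B := by
  have hu : A ×ˢ (insert i B) = (A ×ˢ {i}) ∪ (A ×ˢ B) := by
    ext ⟨x, y⟩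
    simp only [Finset.mem_product, Finset.mem_insert, Finset.mem_union, Finset.mem_singleton,
      and_or_left]
  have hdisj : Disjoint ((A ×ˢ {i}).filter (fun p => p.2 < p.1))
      ((A ×ˢ B).filter (fun p => p.2 < p.1)) := by
    simp only [Finset.disjoint_left, Finset.mem_filter, Finset.mem_product,
      Finset.mem_singleton]
    rintro ⟨a, b⟩ ⟨⟨_, hb⟩, _⟩ ⟨⟨_, hb'⟩, _⟩
    exact h (hb ▸ hb')
  rw [Fc, hu, Finset.filter_union, Finset.card_union_of_disjoint hdisj]
  rw [← Fc, ← Fc, Fc_singleton_right]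

/-- The key sign identity. -/
lemma sign_key (n : ℕ) (I : Finset (Fin n)) (i : Fin n) (h : i ∈ I) :
    sgn n {i} Iᶜ * eps n I
      = (-1 : ℤ) ^ ((I.filter (fun j => j < i)).card) * eps n (I.erase i) := by
  set I' := I.erase i with hI'
  have hiI' : i ∉ I' := Finset.notMem_erase i I
  have hins : insert i I' = I := Finset.insert_erase h
  set a := (Iᶜ.filter (fun k => k < i)).card with ha
  set b := Fc I' Iᶜ with hb
  set d := (I'.filter (fun k => k < i)).card with hd
  set e := (I'.filter (fun k => i < k)).card with he
  set m := I'.card with hm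
  -- relations
  have hfa : Fc {i} Iᶜ = a := Fc_singleton_left i Iᶜ
  have hFI : Fc I Iᶜ = a + b := by
    have h2 := Fc_insert_left i I' Iᶜ hiI'
    rw [hins] at h2
    exact h2
  have hcomplI' : I'ᶜ = insert i Iᶜ := Finset.compl_erase
  have hiIc : i ∉ Iᶜ := by simp [h]
  have hFI' : Fc I' I'ᶜ = e + b := by rw [hcomplI', Fc_insert_right I' i Iᶜ hiIc]
  have hde : d + e = m := by
    have hfe : I'.filter (fun k => i < k) = I'.filter (fun k => ¬ k < i) := by
      apply Finset.filter_congr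
      intro j hj
      have hji : j ≠ i := Finset.ne_of_mem_erase hj
      simp only [not_lt, eq_iff_iff]
      constructor
      · intro hij; exact le_of_lt hij
      · intro hij; exact lt_of_le_of_ne hij (Ne.symm hji)
    rw [hd, he, hfe, hm]
    exact Finset.card_filter_add_card_filter_not _
  have hcard : I.card = m + 1 := by
    rw [← hins, Finset.card_insert_of_notMem hiI']
  have hdI : (I.filter (fun j => j < i)).card = d := by
    congr 1
    ext j
    simp only [Finset.mem_filter, hI', Finset.mem_erase]
    constructor
    · rintro ⟨hj, hji⟩; exact ⟨⟨ne_of_lt hji, hj⟩, hji⟩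
    · rintro ⟨⟨_, hj⟩, hji⟩; exact ⟨hj, hji⟩
  -- now unfold all signs
  have hsgn1 : sgn n {i} Iᶜ = (-1 : ℤ) ^ a := by rw [sgn, ← Fc, hfa]
  have hsgnI : sgn n I Iᶜ = (-1 : ℤ) ^ (a + b) := by rw [sgn, ← Fc, hFI]
  have hsgnI' : sgn n I' I'ᶜ = (-1 : ℤ) ^ (e + b) := by rw [sgn, ← Fc, hFI']
  rw [eps, eps, hsgn1, hsgnI, hsgnI', hdI, hcard]
  have hcard' : I'.card = m := hm.symm
  rw [hcard']
  have htri : (m + 1) * (m + 1 - 1) / 2 = m * (m - 1) / 2 + m := Nat.triangle_succ m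
  rw [htri]
  rw [← pow_add, ← pow_add, ← pow_add, ← pow_add]
  have hexp : a + (m * (m - 1) / 2 + m + (a + b)) = 2 * a + (d + (m * (m - 1) / 2 + (e + b))) := by
    omega
  rw [hexp, pow_add, pow_mul]
  norm_num

lemma wl_single {n : ℕ} (i : Fin n) (g : Lam n) (S : Finset (Fin n)) :
    wl (basL n {i}) g S = if i ∈ S then sgn n {i} (S \ {i}) * g (S \ {i}) else 0 := by
  rw [wl]
  have : ∀ J ∈ S.powerset,
      sgn n J (S \ J) * basL n {i} J * g (S \ J)
        = if J = {i} then sgn n {i} (S \ {i}) * g (S \ {i}) else 0 := by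
    intro J _
    rw [basL]
    split_ifs with hJ
    · subst hJ; ring
    · ring
  rw [Finset.sum_congr rfl this, Finset.sum_ite_eq' S.powerset {i}]
  simp [Finset.singleton_subset_iff]

theorem stmt15 (n : ℕ) (hn : 1 ≤ n) (I : Finset (Fin n)) (i : Fin n) :
    (i ∈ I → wl (basL n {i}) (alphaL n I)
        = ((-1 : ℤ) ^ ((I.filter (fun j => j < i)).card)) • alphaL n (I.erase i))
    ∧ (i ∉ I → wl (basL n {i}) (alphaL n I) = 0) := by
  constructor
  · intro h
    funext S
    rw [wl_single]
    have hcomplI' : (I.erase i)ᶜ = insert i Iᶜ := Finset.compl_erase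
    have hiIc : i ∉ Iᶜ := by simp [h]
    simp only [Pi.smul_apply, smul_eq_mul, alphaL]
    by_cases hS : S = (I.erase i)ᶜ
    · subst hS
      have hiS : i ∈ (I.erase i)ᶜ := by rw [hcomplI']; exact Finset.mem_insert_self i Iᶜ
      have hdiff : (I.erase i)ᶜ \ {i} = Iᶜ := by
        rw [hcomplI', Finset.sdiff_singleton_eq_erase, Finset.erase_insert hiIc]
      rw [if_pos hiS, hdiff, if_pos rfl, if_pos rfl]
      exact sign_key n I i h
    · rw [if_neg hS, mul_zero]
      by_cases hiS : i ∈ S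
      · rw [if_pos hiS]
        have : S \ {i} ≠ Iᶜ := by
          intro heq
          apply hS
          rw [hcomplI', ← heq, Finset.sdiff_singleton_eq_erase, Finset.insert_erase hiS]
        rw [if_neg this, mul_zero]
      · rw [if_neg hiS]
  · intro h
    funext S
    rw [wl_single]
    have hiIc : i ∈ Iᶜ := Finset.mem_compl.mpr h
    by_cases hiS : i ∈ S
    · rw [if_pos hiS, alphaL]
      have : S \ {i} ≠ Iᶜ := by
        intro heq
        have : i ∈ S \ {i} := heq ▸ hiIc
        simp at this
      rw [if_neg this, mul_zero]
      rfl
    · rw [if_neg hiS]; rfl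
end

section
/- Fix 1 ≤ k ≤ n. The derivations D^{(k)}_k, …, D^{(k)}_n of ℤ[e_k, …, e_n] pairwise commute, and the BV bracket identity holds in H_k: for all subsets I, K ⊆ {k, …, n} and monomials e^J, e^L of ℤ[e_k, …, e_n], (−1)^{|I|} {α_I e^J, α_K e^L} = Δ_k(α_I e^L) · (α_K e^J) + (−1)^{|I|} (α_I e^L) · Δ_k(α_K e^J). -/
open MvPolynomial Finset

/-- The element `e_t` of `R_k = ℤ[e_k, …, e_n]` (variable index `i : Fin (n+1-k)`
corresponds to `e_{k+i}`), with `e_0 = 1` and `e_t = 0` for `0 < t < k` or `t > n`. -/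
noncomputable def eek (n k : ℕ) (t : ℕ) : MvPolynomial (Fin (n + 1 - k)) ℤ :=
  if t = 0 then 1
  else if h : k ≤ t ∧ t ≤ n then MvPolynomial.X ⟨t - k, by omega⟩ else 0

/-- The derivation `D^{(k)}_ℓ = ∂/∂e_ℓ + ∑_{j=k}^{n−ℓ} e_j ∂/∂e_{ℓ+j}` (with `ℓ = k + i`). -/
noncomputable def DDk (n k : ℕ) (i : Fin (n + 1 - k)) :
    MvPolynomial (Fin (n + 1 - k)) ℤ →ₗ[ℤ] MvPolynomial (Fin (n + 1 - k)) ℤ :=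
  ∑ j : Fin (n + 1 - k), if i ≤ j then
    (LinearMap.mulLeft ℤ (eek n k (j.val - i.val))).comp (MvPolynomial.pderiv j).toLinearMap
  else 0

/-- The model of `H_k = Λ_ℤ(α_k,…,α_n) ⊗ ℤ[e_k,…,e_n]`: `a : Hk n k` represents
`∑_I α_I · (a I)` (index `i : Fin (n+1-k)` corresponds to `α_{k+i}`). -/
abbrev Hk (n k : ℕ) := Finset (Fin (n + 1 - k)) → MvPolynomial (Fin (n + 1 - k)) ℤ

/-- The Koszul sign defined by `α_{I∪K} = sgn(I,K) α_I α_K` for disjoint `I, K`. -/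
def sgnk (n k : ℕ) (I K : Finset (Fin (n + 1 - k))) : ℤ :=
  (-1) ^ (((I ×ˢ K).filter (fun p => p.2 < p.1)).card)

/-- The basis element `α_I · p`. -/
noncomputable def bask {n k : ℕ} (I : Finset (Fin (n + 1 - k)))
    (p : MvPolynomial (Fin (n + 1 - k)) ℤ) : Hk n k :=
  fun S => if S = I then p else 0

/-- The graded-commutative product on `H_k`. -/
noncomputable def wmulk {n k : ℕ} (a b : Hk n k) : Hk n k :=
  fun S => ∑ I ∈ S.powerset, sgnk n k I (S \ I) * a I * b (S \ I)

/-- The BV operator `Δ_k(α_I e^J) = ∑_ℓ (∂α_I/∂α_ℓ) · D^{(k)}_ℓ(e^J)`, extended ℤ-linearly. -/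
noncomputable def Hdelk {n k : ℕ} (a : Hk n k) : Hk n k :=
  fun S => ∑ l : Fin (n + 1 - k), if l ∈ S then 0
    else ((-1 : ℤ) ^ ((S.filter (fun i => i < l)).card)) • DDk n k l (a (insert l S))

/-- The BV bracket `{a,b} = (−1)^{|a|}(Δ_k(a·b) − Δ_k(a)·b) − a·Δ_k(b)`, defined on basis
elements and extended ℤ-bilinearly. -/
noncomputable def bkk {n k : ℕ} (a b : Hk n k) : Hk n k :=
  ∑ I : Finset (Fin (n + 1 - k)),
    (((-1 : ℤ) ^ I.card) • (Hdelk (wmulk (bask I (a I)) b) - wmulk (Hdelk (bask I (a I))) b)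
      - wmulk (bask I (a I)) (Hdelk b))

/-!
The `D_ℓ` are derivations of `ℤ[e_k, …, e_n]`, so their commutator is a derivation and is
determined by its values on the generators, where `D_ℓ D_ℓ' e_m = e_{m-ℓ-ℓ'}` (with `e_0 = 1`,
and `0` when `m < ℓ + ℓ'`) is symmetric in `ℓ, ℓ'`.

For the bracket, `Δ = ∑_ℓ ∂/∂α_ℓ ∘ D_ℓ`, where `D_ℓ` acting on coefficients is an even
derivation of the product and `∂/∂α_ℓ` is an odd one. Writing `α_I p = p • α_I`, the Leibniz
rules give
`Δ(α_I p · α_K q) - Δ(α_I p) · α_K q - (-1)^|I| α_I p · Δ(α_K q)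
  = ∑_ℓ (p D_ℓ q) • (∂_ℓ α_I) α_K + (-1)^|I| (q D_ℓ p) • α_I (∂_ℓ α_K)`,
and the right-hand side is `Δ(α_I q) · α_K p + (-1)^|I| α_I q · Δ(α_K p)`.
-/

section Derivations
variable {n k : ℕ}

noncomputable def DDkDerivation (n k : ℕ) (i : Fin (n + 1 - k)) :
    Derivation ℤ (MvPolynomial (Fin (n + 1 - k)) ℤ) (MvPolynomial (Fin (n + 1 - k)) ℤ) :=
  ∑ j : Fin (n + 1 - k), if i ≤ j then eek n k (j.val - i.val) • pderiv j else 0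

lemma DDkDerivation_apply (i : Fin (n + 1 - k)) (f : MvPolynomial (Fin (n + 1 - k)) ℤ) :
    DDkDerivation n k i f = DDk n k i f := by
  rw [← Derivation.coeFnAddMonoidHom_apply, DDkDerivation, map_sum, Finset.sum_apply, DDk,
    LinearMap.sum_apply]
  refine Finset.sum_congr rfl fun j _ => ?_
  split_ifs <;> simp

lemma DDk_X (i m : Fin (n + 1 - k)) :
    DDk n k i (X m) = if i ≤ m then eek n k (m.val - i.val) else 0 := by
  rw [DDk, LinearMap.sum_apply, Finset.sum_eq_single m]
  · split_ifs <;> simp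
  · intro j _ hj
    split_ifs <;> simp [pderiv_X, hj.symm]
  · simp

lemma DDk_eek (hk : 1 ≤ k) (i : Fin (n + 1 - k)) {t : ℕ} (ht : t ≤ n - k) :
    DDk n k i (eek n k t) = if i.val + k ≤ t then eek n k (t - (i.val + k)) else 0 := by
  rcases Nat.eq_zero_or_pos t with rfl | htpos
  · rw [eek, if_pos rfl, ← DDkDerivation_apply, Derivation.map_one_eq_zero, if_neg (by omega)]
  by_cases hkt : k ≤ t
  · rw [eek, if_neg (by omega), dif_pos (by omega), DDk_X]
    refine if_congr (by simp [Fin.le_def]; omega) (congrArg _ (by simp; omega)) rfl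
  · rw [eek, if_neg (by omega), dif_neg (by omega), map_zero, if_neg (by omega)]

lemma DDk_DDk_X (hk : 1 ≤ k) (i j m : Fin (n + 1 - k)) :
    DDk n k i (DDk n k j (X m)) =
      if i.val + j.val + k ≤ m.val then eek n k (m.val - (i.val + j.val + k)) else 0 := by
  rw [DDk_X]
  split_ifs with hjm h h
  · rw [DDk_eek hk i (by omega), if_pos (by omega)]
    congr 1; omega
  · rw [DDk_eek hk i (by omega), if_neg (by omega)]
  · rw [Fin.le_def] at hjm; omega
  · exact map_zero _

theorem DDk_comp_comm (hk : 1 ≤ k) (i j : Fin (n + 1 - k)) :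
    (DDk n k i).comp (DDk n k j) = (DDk n k j).comp (DDk n k i) := by
  have hbracket : ⁅DDkDerivation n k i, DDkDerivation n k j⁆ = 0 := by
    refine MvPolynomial.derivation_ext fun m => ?_
    rw [Derivation.commutator_apply, Derivation.zero_apply, sub_eq_zero]
    simp only [DDkDerivation_apply, DDk_DDk_X hk, add_comm i.val j.val]
  refine LinearMap.ext fun f => ?_
  have := congrArg (· f) hbracket
  simpa [Derivation.commutator_apply, sub_eq_zero, DDkDerivation_apply] using this

lemma DDk_mul (l : Fin (n + 1 - k)) (p q : MvPolynomial (Fin (n + 1 - k)) ℤ) :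
    DDk n k l (p * q) = DDk n k l p * q + p * DDk n k l q := by
  simp only [← DDkDerivation_apply, Derivation.leibniz, smul_eq_mul]
  ring

end Derivations

section Signs
variable {n k : ℕ}

lemma sgnk_union_left {A B : Finset (Fin (n + 1 - k))} (h : Disjoint A B)
    (C : Finset (Fin (n + 1 - k))) :
    sgnk n k (A ∪ B) C = sgnk n k A C * sgnk n k B C := by
  rw [sgnk, sgnk, sgnk, ← pow_add, Finset.union_product, Finset.filter_union,
    Finset.card_union_of_disjoint]
  exact Finset.disjoint_filter_filter (Finset.disjoint_product.2 (Or.inl h))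

lemma sgnk_union_right (A : Finset (Fin (n + 1 - k))) {B C : Finset (Fin (n + 1 - k))}
    (h : Disjoint B C) :
    sgnk n k A (B ∪ C) = sgnk n k A B * sgnk n k A C := by
  rw [sgnk, sgnk, sgnk, ← pow_add, Finset.product_union, Finset.filter_union,
    Finset.card_union_of_disjoint]
  exact Finset.disjoint_filter_filter (Finset.disjoint_product.2 (Or.inr h))

lemma sgnk_mul_self (A B : Finset (Fin (n + 1 - k))) : sgnk n k A B * sgnk n k A B = 1 := by
  rw [sgnk, ← pow_add, Even.neg_one_pow ⟨_, rfl⟩]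

lemma sgnk_singleton_left (l : Fin (n + 1 - k)) (S : Finset (Fin (n + 1 - k))) :
    sgnk n k {l} S = (-1) ^ (S.filter (· < l)).card := by
  rw [sgnk, Finset.singleton_product, Finset.filter_map, Finset.card_map]
  rfl

lemma sgnk_singleton_right (S : Finset (Fin (n + 1 - k))) (l : Fin (n + 1 - k)) :
    sgnk n k S {l} = (-1) ^ (S.filter (l < ·)).card := by
  rw [sgnk, Finset.product_singleton, Finset.filter_map, Finset.card_map]
  rfl

lemma sgnk_singleton_mul_swap {l : Fin (n + 1 - k)} {S : Finset (Fin (n + 1 - k))} (h : l ∉ S) :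
    sgnk n k {l} S * sgnk n k S {l} = (-1) ^ S.card := by
  rw [sgnk_singleton_left, sgnk_singleton_right, ← pow_add,
    ← Finset.card_filter_add_card_filter_not (s := S) (· < l)]
  congr 3
  refine Finset.filter_congr fun x hx => ?_
  have : x ≠ l := fun hxl => h (hxl ▸ hx)
  simp only [not_lt]
  exact ⟨le_of_lt, fun h' => lt_of_le_of_ne h' this.symm⟩

lemma sgnk_eq_mul_erase_left {l : Fin (n + 1 - k)} {A : Finset (Fin (n + 1 - k))} (h : l ∈ A)
    (C : Finset (Fin (n + 1 - k))) :
    sgnk n k A C = sgnk n k {l} C * sgnk n k (A.erase l) C := by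
  conv_lhs => rw [← Finset.insert_erase h, Finset.insert_eq]
  exact sgnk_union_left (Finset.disjoint_singleton_left.2 (Finset.notMem_erase l A)) C

lemma sgnk_eq_mul_erase_right (A : Finset (Fin (n + 1 - k))) {l : Fin (n + 1 - k)}
    {C : Finset (Fin (n + 1 - k))} (h : l ∈ C) :
    sgnk n k A C = sgnk n k A {l} * sgnk n k A (C.erase l) := by
  conv_lhs => rw [← Finset.insert_erase h, Finset.insert_eq]
  exact sgnk_union_right A (Finset.disjoint_singleton_left.2 (Finset.notMem_erase l C))

end Signs

section Algebra
variable {n k : ℕ}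

lemma bask_eq_smul (I : Finset (Fin (n + 1 - k))) (p : MvPolynomial (Fin (n + 1 - k)) ℤ) :
    bask I p = p • bask I 1 := by
  funext S; by_cases h : S = I <;> simp [bask, h]

lemma bask_zero (I : Finset (Fin (n + 1 - k))) :
    bask I (0 : MvPolynomial (Fin (n + 1 - k)) ℤ) = 0 := by
  funext S; simp [bask]

lemma wmulk_smul_left {M : Type*} [DistribSMul M (MvPolynomial (Fin (n + 1 - k)) ℤ)]
    [IsScalarTower M (MvPolynomial (Fin (n + 1 - k)) ℤ) (MvPolynomial (Fin (n + 1 - k)) ℤ)]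
    [SMulCommClass M (MvPolynomial (Fin (n + 1 - k)) ℤ) (MvPolynomial (Fin (n + 1 - k)) ℤ)]
    (c : M) (a b : Hk n k) : wmulk (c • a) b = c • wmulk a b := by
  funext S
  simp only [wmulk, Pi.smul_apply, Finset.smul_sum, mul_smul_comm, smul_mul_assoc]

lemma wmulk_smul_right {M : Type*} [DistribSMul M (MvPolynomial (Fin (n + 1 - k)) ℤ)]
    [SMulCommClass M (MvPolynomial (Fin (n + 1 - k)) ℤ) (MvPolynomial (Fin (n + 1 - k)) ℤ)]
    (c : M) (a b : Hk n k) : wmulk a (c • b) = c • wmulk a b := by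
  funext S
  simp only [wmulk, Pi.smul_apply, Finset.smul_sum, mul_smul_comm]

lemma wmulk_sum_left {ι : Type*} (s : Finset ι) (f : ι → Hk n k) (b : Hk n k) :
    wmulk (∑ i ∈ s, f i) b = ∑ i ∈ s, wmulk (f i) b := by
  funext S
  simp only [wmulk, Finset.sum_apply, Finset.sum_mul, Finset.mul_sum]
  exact Finset.sum_comm

lemma wmulk_sum_right {ι : Type*} (s : Finset ι) (a : Hk n k) (f : ι → Hk n k) :
    wmulk a (∑ i ∈ s, f i) = ∑ i ∈ s, wmulk a (f i) := by
  funext S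
  simp only [wmulk, Finset.sum_apply, Finset.mul_sum]
  exact Finset.sum_comm

lemma wmulk_zero_left (b : Hk n k) : wmulk 0 b = 0 := by
  funext S; simp [wmulk]

lemma wmulk_zero_right (a : Hk n k) : wmulk a 0 = 0 := by
  funext S; simp [wmulk]

lemma wmulk_bask_bask (I K : Finset (Fin (n + 1 - k))) (p q : MvPolynomial (Fin (n + 1 - k)) ℤ) :
    wmulk (bask I p) (bask K q) =
      if Disjoint I K then sgnk n k I K • bask (I ∪ K) (p * q) else 0 := by
  funext S
  by_cases hIS : I ⊆ S
  · rw [wmulk, Finset.sum_eq_single_of_mem I (Finset.mem_powerset.2 hIS)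
      fun J _ hJ => by simp [bask, hJ]]
    by_cases hK : S \ I = K
    · subst hK
      simp [bask, Finset.disjoint_sdiff, Finset.union_sdiff_of_subset hIS, mul_assoc]
    · have hS : Disjoint I K → S ≠ I ∪ K := by
        rintro hd rfl
        exact hK (Finset.union_sdiff_cancel_left hd)
      split_ifs with hd <;> simp [bask, hK, hS, hd]
  · have hS : S ≠ I ∪ K := fun h => hIS (h ▸ Finset.subset_union_left)
    rw [wmulk, Finset.sum_eq_zero fun J hJ => ?_]
    · split_ifs <;> simp [bask, hS]
    · have hJI : J ≠ I := fun h => hIS (h ▸ Finset.mem_powerset.1 hJ)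
      simp [bask, hJI]

/-- `∂/∂α_l`, read off from `α_{insert l S} = sgnk {l} S • α_l α_S`. -/
noncomputable def alphaDeriv (l : Fin (n + 1 - k)) :
    Hk n k →ₗ[MvPolynomial (Fin (n + 1 - k)) ℤ] Hk n k where
  toFun a S := if l ∈ S then 0 else sgnk n k {l} S • a (insert l S)
  map_add' a b := by funext S; by_cases h : l ∈ S <;> simp [h]
  map_smul' r a := by funext S; by_cases h : l ∈ S <;> simp [h, mul_left_comm]

lemma alphaDeriv_bask (l : Fin (n + 1 - k)) (I : Finset (Fin (n + 1 - k)))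
    (p : MvPolynomial (Fin (n + 1 - k)) ℤ) :
    alphaDeriv l (bask I p) =
      if l ∈ I then sgnk n k {l} (I.erase l) • bask (I.erase l) p else 0 := by
  by_cases hlI : l ∈ I
  · rw [if_pos hlI]
    funext S
    simp only [alphaDeriv, LinearMap.coe_mk, AddHom.coe_mk, bask, Pi.smul_apply]
    by_cases hlS : l ∈ S
    · have hS : S ≠ I.erase l := fun h => Finset.notMem_erase l I (h ▸ hlS)
      simp [hlS, hS]
    · have hins : insert l S = I ↔ S = I.erase l :=
        ⟨fun h => h ▸ (Finset.erase_insert hlS).symm, fun h => h ▸ Finset.insert_erase hlI⟩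
      by_cases hS : S = I.erase l <;> simp [hlS, hS, hins, Finset.insert_erase hlI]
  · rw [if_neg hlI]
    funext S
    have hins : insert l S ≠ I := fun h => hlI (h ▸ Finset.mem_insert_self l S)
    simp [alphaDeriv, bask, hins]

lemma alphaDeriv_wmulk_bask_of_disjoint {I K : Finset (Fin (n + 1 - k))} (hd : Disjoint I K)
    (l : Fin (n + 1 - k)) (p q : MvPolynomial (Fin (n + 1 - k)) ℤ) :
    alphaDeriv l (wmulk (bask I p) (bask K q)) =
      wmulk (alphaDeriv l (bask I p)) (bask K q)
        + (-1 : ℤ) ^ I.card • wmulk (bask I p) (alphaDeriv l (bask K q)) := by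
  rw [wmulk_bask_bask, if_pos hd, map_zsmul, alphaDeriv_bask, alphaDeriv_bask, alphaDeriv_bask]
  by_cases hlI : l ∈ I
  · have hlK : l ∉ K := Finset.disjoint_left.1 hd hlI
    have hd' : Disjoint (I.erase l) K := hd.mono_left (Finset.erase_subset l I)
    have hU : (I ∪ K).erase l = I.erase l ∪ K := by
      rw [Finset.erase_union_distrib, Finset.erase_eq_of_notMem hlK]
    have hsign : sgnk n k I K * sgnk n k {l} (I.erase l ∪ K)
        = sgnk n k {l} (I.erase l) * sgnk n k (I.erase l) K := by
      rw [sgnk_eq_mul_erase_left hlI, sgnk_union_right _ hd']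
      linear_combination (sgnk n k {l} (I.erase l) * sgnk n k (I.erase l) K) * sgnk_mul_self {l} K
    simp only [Finset.mem_union, hlI, hlK, true_or, if_true, if_false, wmulk_smul_left,
      wmulk_zero_right, smul_zero, add_zero, wmulk_bask_bask, if_pos hd', hU, smul_smul, hsign]
  by_cases hlK : l ∈ K
  · have hd' : Disjoint I (K.erase l) := hd.mono_right (Finset.erase_subset l K)
    have hU : (I ∪ K).erase l = I ∪ K.erase l := by
      rw [Finset.erase_union_distrib, Finset.erase_eq_of_notMem hlI]
    have hsign : sgnk n k I K * sgnk n k {l} (I ∪ K.erase l)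
        = (-1) ^ I.card * (sgnk n k {l} (K.erase l) * sgnk n k I (K.erase l)) := by
      rw [sgnk_eq_mul_erase_right I hlK, sgnk_union_right _ hd',
        ← sgnk_singleton_mul_swap hlI]
      ring
    simp only [Finset.mem_union, hlI, hlK, or_true, if_true, if_false, wmulk_smul_right,
      wmulk_zero_left, zero_add, wmulk_bask_bask, if_pos hd', hU, smul_smul, hsign]
  · simp [hlI, hlK, wmulk_zero_left, wmulk_zero_right]

lemma wmulk_alphaDeriv_bask_add_of_not_disjoint {I K : Finset (Fin (n + 1 - k))}
    (hd : ¬Disjoint I K) (l : Fin (n + 1 - k)) (p q : MvPolynomial (Fin (n + 1 - k)) ℤ) :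
    wmulk (alphaDeriv l (bask I p)) (bask K q)
      + (-1 : ℤ) ^ I.card • wmulk (bask I p) (alphaDeriv l (bask K q)) = 0 := by
  have herase : Disjoint (I.erase l) K ↔ Disjoint I (K.erase l) := by
    rw [Finset.disjoint_iff_inter_eq_empty, Finset.disjoint_iff_inter_eq_empty,
      Finset.erase_inter, Finset.inter_erase]
  rw [alphaDeriv_bask, alphaDeriv_bask]
  by_cases hd' : Disjoint (I.erase l) K
  · have hlI : l ∈ I := by
      by_contra hlI
      exact hd (Finset.erase_eq_of_notMem hlI ▸ hd')
    have hlK : l ∈ K := by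
      by_contra hlK
      exact hd (Finset.erase_eq_of_notMem hlK ▸ herase.1 hd')
    have hU : I.erase l ∪ K = I ∪ K.erase l := by
      ext x; by_cases hx : x = l <;> simp [hx, hlI, hlK]
    have hsign : sgnk n k {l} (I.erase l) * sgnk n k (I.erase l) K
        + (-1) ^ I.card * (sgnk n k {l} (K.erase l) * sgnk n k I (K.erase l)) = 0 := by
      rw [sgnk_eq_mul_erase_right _ hlK, sgnk_eq_mul_erase_left hlI,
        ← Finset.card_erase_add_one hlI, pow_succ]
      linear_combination sgnk n k (I.erase l) (K.erase l) *
          sgnk_singleton_mul_swap (Finset.notMem_erase l I)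
        - (-1) ^ (I.erase l).card * sgnk n k (I.erase l) (K.erase l) *
          sgnk_mul_self {l} (K.erase l)
    simp only [hlI, hlK, if_true, wmulk_smul_left, wmulk_smul_right, wmulk_bask_bask,
      if_pos hd', if_pos (herase.1 hd'), hU, smul_smul, ← add_smul, hsign, zero_smul]
  · have hd'' := mt herase.2 hd'
    split_ifs <;> simp only [wmulk_smul_left, wmulk_smul_right, wmulk_bask_bask, if_neg hd',
      if_neg hd'', wmulk_zero_left, wmulk_zero_right, smul_zero, add_zero]

lemma alphaDeriv_wmulk_bask (l : Fin (n + 1 - k)) (I K : Finset (Fin (n + 1 - k)))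
    (p q : MvPolynomial (Fin (n + 1 - k)) ℤ) :
    alphaDeriv l (wmulk (bask I p) (bask K q)) =
      wmulk (alphaDeriv l (bask I p)) (bask K q)
        + (-1 : ℤ) ^ I.card • wmulk (bask I p) (alphaDeriv l (bask K q)) := by
  by_cases hd : Disjoint I K
  · exact alphaDeriv_wmulk_bask_of_disjoint hd l p q
  · rw [wmulk_alphaDeriv_bask_add_of_not_disjoint hd, wmulk_bask_bask, if_neg hd, map_zero]

end Algebra

section BV
variable {n k : ℕ}

noncomputable def coeffDDk (l : Fin (n + 1 - k)) (a : Hk n k) : Hk n k := fun S => DDk n k l (a S)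

lemma coeffDDk_smul (l : Fin (n + 1 - k)) (r : MvPolynomial (Fin (n + 1 - k)) ℤ) (a : Hk n k) :
    coeffDDk l (r • a) = DDk n k l r • a + r • coeffDDk l a := by
  funext S
  simp only [coeffDDk, Pi.smul_apply, Pi.add_apply, smul_eq_mul, DDk_mul]

lemma coeffDDk_wmulk (l : Fin (n + 1 - k)) (a b : Hk n k) :
    coeffDDk l (wmulk a b) = wmulk (coeffDDk l a) b + wmulk a (coeffDDk l b) := by
  funext S
  simp only [coeffDDk, wmulk, Pi.add_apply, map_sum, ← Finset.sum_add_distrib, ← zsmul_eq_mul,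
    map_zsmul, DDk_mul]

lemma coeffDDk_bask_one (l : Fin (n + 1 - k)) (I : Finset (Fin (n + 1 - k))) :
    coeffDDk l (bask I 1) = 0 := by
  funext S
  by_cases h : S = I <;> simp [coeffDDk, bask, h, ← DDkDerivation_apply]

lemma Hdelk_eq_sum (a : Hk n k) : Hdelk a = ∑ l, alphaDeriv l (coeffDDk l a) := by
  funext S
  simp [Hdelk, alphaDeriv, coeffDDk, sgnk_singleton_left]

lemma Hdelk_smul_of_coeffDDk_eq_zero {x : Hk n k} (hx : ∀ l, coeffDDk l x = 0)
    (r : MvPolynomial (Fin (n + 1 - k)) ℤ) :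
    Hdelk (r • x) = ∑ l, DDk n k l r • alphaDeriv l x := by
  simp only [Hdelk_eq_sum, coeffDDk_smul, hx, smul_zero, add_zero, map_smul]

theorem Hdelk_wmulk_bask_sub (I K : Finset (Fin (n + 1 - k)))
    (p q : MvPolynomial (Fin (n + 1 - k)) ℤ) :
    Hdelk (wmulk (bask I p) (bask K q)) - wmulk (Hdelk (bask I p)) (bask K q)
        - (-1 : ℤ) ^ I.card • wmulk (bask I p) (Hdelk (bask K q))
      = wmulk (Hdelk (bask I q)) (bask K p)
        + (-1 : ℤ) ^ I.card • wmulk (bask I q) (Hdelk (bask K p)) := by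
  have hΔ (M : Finset (Fin (n + 1 - k))) :=
    Hdelk_smul_of_coeffDDk_eq_zero (fun l => coeffDDk_bask_one l M)
  have hΔprod := Hdelk_smul_of_coeffDDk_eq_zero (x := wmulk (bask I 1) (bask K 1)) fun l => by
    rw [coeffDDk_wmulk, coeffDDk_bask_one, coeffDDk_bask_one, wmulk_zero_left, zero_add,
      wmulk_zero_right]
  rw [bask_eq_smul I p, bask_eq_smul K q, bask_eq_smul I q, bask_eq_smul K p]
  simp only [wmulk_smul_left, wmulk_smul_right, smul_smul, hΔ, hΔprod]
  simp only [alphaDeriv_wmulk_bask, DDk_mul, wmulk_sum_left, wmulk_sum_right, wmulk_smul_left,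
    wmulk_smul_right, Finset.smul_sum, ← Finset.sum_add_distrib, ← Finset.sum_sub_distrib]
  refine Finset.sum_congr rfl fun l _ => ?_
  module

lemma Hdelk_zero : Hdelk (0 : Hk n k) = 0 := by
  funext S; simp [Hdelk]

lemma bkk_bask_left (I : Finset (Fin (n + 1 - k)))
    (p : MvPolynomial (Fin (n + 1 - k)) ℤ) (b : Hk n k) :
    bkk (bask I p) b = (-1 : ℤ) ^ I.card •
        (Hdelk (wmulk (bask I p) b) - wmulk (Hdelk (bask I p)) b) - wmulk (bask I p) (Hdelk b) := by
  rw [bkk, Finset.sum_eq_single_of_mem I (Finset.mem_univ I) fun J _ hJ => ?_]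
  · simp [bask]
  · have hJ : bask I p J = 0 := if_neg hJ
    simp [hJ, bask_zero, wmulk_zero_left, Hdelk_zero]

end BV

theorem stmt17_general (n k : ℕ) (hk : 1 ≤ k) :
    (∀ i j : Fin (n + 1 - k), (DDk n k i).comp (DDk n k j) = (DDk n k j).comp (DDk n k i))
    ∧ (∀ (I K : Finset (Fin (n + 1 - k))) (J L : Fin (n + 1 - k) →₀ ℕ),
        ((-1 : ℤ) ^ I.card) •
            bkk (bask I (MvPolynomial.monomial J 1)) (bask K (MvPolynomial.monomial L 1))
          = wmulk (Hdelk (bask I (MvPolynomial.monomial L 1)))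
              (bask K (MvPolynomial.monomial J 1))
            + ((-1 : ℤ) ^ I.card) •
                wmulk (bask I (MvPolynomial.monomial L 1))
                  (Hdelk (bask K (MvPolynomial.monomial J 1)))) := by
  refine ⟨DDk_comp_comm hk, fun I K J L => ?_⟩
  rw [bkk_bask_left, smul_sub, smul_smul, ← pow_add, Even.neg_one_pow ⟨_, rfl⟩, one_smul]
  exact Hdelk_wmulk_bask_sub I K _ _

theorem stmt17 (n k : ℕ) (hk : 1 ≤ k) (hkn : k ≤ n) :
    (∀ i j : Fin (n + 1 - k), (DDk n k i).comp (DDk n k j) = (DDk n k j).comp (DDk n k i))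
    ∧ (∀ (I K : Finset (Fin (n + 1 - k))) (J L : Fin (n + 1 - k) →₀ ℕ),
        ((-1 : ℤ) ^ I.card) •
            bkk (bask I (MvPolynomial.monomial J 1)) (bask K (MvPolynomial.monomial L 1))
          = wmulk (Hdelk (bask I (MvPolynomial.monomial L 1)))
              (bask K (MvPolynomial.monomial J 1))
            + ((-1 : ℤ) ^ I.card) •
                wmulk (bask I (MvPolynomial.monomial L 1))
                  (Hdelk (bask K (MvPolynomial.monomial J 1)))) :=
  stmt17_general n k hk
end
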